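/- arXiv:1411.0923 — 6 statements merged into one kernel-verified Lean document; each statement's English description precedes it below -/
import Mathlib

section
/- Let n ≥ 1 and write n = 3k + r with 0 ≤ r < 3 (so k = ⌊n/3⌋). Then the optimal rubbling number of the ladder P_n□P_2 is at most 1 + 2k if r = 0, and at most 2 + 2k if r = 1 or r = 2. -/
open SimpleGraph

/-- A single rubbling move on `G`: either a pebbling move (remove two pebbles at `v`,
add one at an adjacent vertex `u`) or a strict rubbling move (remove one pebble each at
distinct `v` and `w`, both adjacent to `u`, and add one pebble at `u`). -/
def RubblingStep {V : Type*} [DecidableEq V] (G : SimpleGraph V) (p q : V → ℕ) : Prop :=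
  (∃ v u, G.Adj v u ∧ 2 ≤ p v ∧
      q = fun x => if x = v then p x - 2 else if x = u then p x + 1 else p x) ∨
  (∃ v w u, v ≠ w ∧ G.Adj v u ∧ G.Adj w u ∧ 1 ≤ p v ∧ 1 ≤ p w ∧
      q = fun x => if x = v then p x - 1 else if x = w then p x - 1
          else if x = u then p x + 1 else p x)

/-- `q` is obtainable from `p` by an executable rubbling sequence. -/
def RubblingReach {V : Type*} [DecidableEq V] (G : SimpleGraph V) : (V → ℕ) → (V → ℕ) → Prop :=
  Relation.ReflTransGen (RubblingStep G)

/-- The vertex `u` is `k`-reachable from the distribution `p`. -/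
def KReachable {V : Type*} [DecidableEq V] (G : SimpleGraph V) (p : V → ℕ) (u : V) (k : ℕ) : Prop :=
  ∃ q, RubblingReach G p q ∧ k ≤ q u

/-- `p` is solvable: every vertex is reachable. -/
def Solvable {V : Type*} [DecidableEq V] (G : SimpleGraph V) (p : V → ℕ) : Prop :=
  ∀ u, KReachable G p u 1

/-- The optimal rubbling number: the minimum size of a solvable distribution. -/
noncomputable def optRub {V : Type*} [DecidableEq V] [Fintype V] (G : SimpleGraph V) : ℕ :=
  sInf {m | ∃ p : V → ℕ, Solvable G p ∧ ∑ v, p v = m}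

/-- The ladder `P_n □ P_2`. -/
def ladder (n : ℕ) : SimpleGraph (Fin n × Fin 2) :=
  pathGraph n □ pathGraph 2

section helpers

variable {V : Type*} [DecidableEq V] (G : SimpleGraph V)

lemma reach_self (p : V → ℕ) (u : V) (h : 1 ≤ p u) : KReachable G p u 1 :=
  ⟨p, Relation.ReflTransGen.refl, h⟩

lemma reach_one (p : V → ℕ) (u a b : V) (hab : a ≠ b) (ha : G.Adj a u) (hb : G.Adj b u)
    (hpa : 1 ≤ p a) (hpb : 1 ≤ p b) : KReachable G p u 1 := by
  refine ⟨_, Relation.ReflTransGen.single (Or.inr ⟨a, b, u, hab, ha, hb, hpa, hpb, rfl⟩), ?_⟩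
  have hua : u ≠ a := (G.ne_of_adj ha).symm
  have hub : u ≠ b := (G.ne_of_adj hb).symm
  simp only [if_neg hua, if_neg hub, eq_self_iff_true, if_true]
  omega

lemma reach_two (p : V → ℕ) (u c d m e : V) (hcd : c ≠ d)
    (hc : G.Adj c m) (hd : G.Adj d m) (hm : G.Adj m u) (he : G.Adj e u)
    (hec : e ≠ c) (hed : e ≠ d) (hem : e ≠ m)
    (hpc : 1 ≤ p c) (hpd : 1 ≤ p d) (hpe : 1 ≤ p e) : KReachable G p u 1 := by
  set p1 : V → ℕ := fun x => if x = c then p x - 1 else if x = d then p x - 1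
      else if x = m then p x + 1 else p x with hp1
  have step1 : RubblingStep G p p1 := Or.inr ⟨c, d, m, hcd, hc, hd, hpc, hpd, rfl⟩
  have hmc : m ≠ c := (G.ne_of_adj hc).symm
  have hmd : m ≠ d := (G.ne_of_adj hd).symm
  have hme : m ≠ e := fun h => hem h.symm
  have h1m : 1 ≤ p1 m := by simp only [hp1, if_neg hmc, if_neg hmd, eq_self_iff_true, if_true]; omega
  have h1e : 1 ≤ p1 e := by simp only [hp1, if_neg hec, if_neg hed, if_neg hem]; omega
  refine ⟨_, Relation.ReflTransGen.head step1
    (Relation.ReflTransGen.single (Or.inr ⟨m, e, u, hme, hm, he, h1m, h1e, rfl⟩)), ?_⟩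
  have hum : u ≠ m := (G.ne_of_adj hm).symm
  have hue : u ≠ e := (G.ne_of_adj he).symm
  simp only [if_neg hum, if_neg hue, eq_self_iff_true, if_true]
  omega

end helpers

def ladderDist (n : ℕ) : Fin n × Fin 2 → ℕ := fun x =>
  if x.2.val = 0 then (if x.1.val % 3 = 0 then 1 else 0)
  else (if x.1.val % 3 = 1 ∨ x.1.val = n - 1 then 1 else 0)

lemma ladder_adj {n : ℕ} (a c : Fin n) (b d : Fin 2) :
    (ladder n).Adj (a, b) (c, d) ↔
      ((a.val + 1 = c.val ∨ c.val + 1 = a.val) ∧ b.val = d.val) ∨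
      ((b.val + 1 = d.val ∨ d.val + 1 = b.val) ∧ a.val = c.val) := by
  simp [ladder, boxProd_adj, pathGraph_adj, Fin.ext_iff]

lemma ladderDist_solvable (n : ℕ) (hn : 1 ≤ n) : Solvable (ladder n) (ladderDist n) := by
  rintro ⟨⟨i, hi⟩, ⟨t, ht⟩⟩
  have h0 : (0 : ℕ) < 2 := by omega
  have h1 : (1 : ℕ) < 2 := by omega
  interval_cases t
  · -- row 0
    rcases (show i % 3 = 0 ∨ i % 3 = 1 ∨ i % 3 = 2 by omega) with h | h | h
    · exact reach_self _ _ _ (by simp only [ladderDist, Fin.val_mk]; norm_num <;> split_ifs <;> omega)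
    · -- strict move from (i-1,0),(i,1)
      refine reach_one _ _ _ (⟨⟨i-1, by omega⟩, ⟨0, h0⟩⟩) (⟨⟨i, hi⟩, ⟨1, h1⟩⟩) ?_ ?_ ?_ ?_ ?_
      · simp only [Ne, Prod.mk.injEq, Fin.mk.injEq, not_and] <;> omega
      · rw [ladder_adj]; left; exact ⟨Or.inl (by simp only [Fin.val_mk] <;> omega), rfl⟩
      · rw [ladder_adj]; right; exact ⟨Or.inr rfl, rfl⟩
      · simp only [ladderDist, Fin.val_mk]; norm_num <;> split_ifs <;> omega
      · simp only [ladderDist, Fin.val_mk]; norm_num <;> split_ifs <;> omega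
    · -- i % 3 = 2
      rcases (show i + 1 < n ∨ i + 1 = n by omega) with hb | hb
      · -- sources (i-2,0),(i-1,1) -> (i-1,0); then with (i+1,0) -> (i,0)
        refine reach_two _ _ _ (⟨⟨i-2, by omega⟩, ⟨0, h0⟩⟩) (⟨⟨i-1, by omega⟩, ⟨1, h1⟩⟩)
          (⟨⟨i-1, by omega⟩, ⟨0, h0⟩⟩) (⟨⟨i+1, hb⟩, ⟨0, h0⟩⟩) ?_ ?_ ?_ ?_ ?_ ?_ ?_ ?_ ?_ ?_ ?_
        · simp only [Ne, Prod.mk.injEq, Fin.mk.injEq, not_and] <;> omega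
        · rw [ladder_adj]; left; exact ⟨Or.inl (by simp only [Fin.val_mk] <;> omega), rfl⟩
        · rw [ladder_adj]; right; exact ⟨Or.inr rfl, rfl⟩
        · rw [ladder_adj]; left; exact ⟨Or.inl (by simp only [Fin.val_mk] <;> omega), rfl⟩
        · rw [ladder_adj]; left; exact ⟨Or.inr rfl, rfl⟩
        · simp only [Ne, Prod.mk.injEq, Fin.mk.injEq, not_and] <;> omega
        · simp only [Ne, Prod.mk.injEq, Fin.mk.injEq, not_and] <;> omega
        · simp only [Ne, Prod.mk.injEq, Fin.mk.injEq, not_and] <;> omega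
        · simp only [ladderDist, Fin.val_mk]; norm_num <;> split_ifs <;> omega
        · simp only [ladderDist, Fin.val_mk]; norm_num <;> split_ifs <;> omega
        · simp only [ladderDist, Fin.val_mk]; norm_num <;> split_ifs <;> omega
      · -- i = n-1; sources (i-2,0),(i-1,1) -> (i-1,0); then with (i,1) -> (i,0)
        refine reach_two _ _ _ (⟨⟨i-2, by omega⟩, ⟨0, h0⟩⟩) (⟨⟨i-1, by omega⟩, ⟨1, h1⟩⟩)
          (⟨⟨i-1, by omega⟩, ⟨0, h0⟩⟩) (⟨⟨i, hi⟩, ⟨1, h1⟩⟩) ?_ ?_ ?_ ?_ ?_ ?_ ?_ ?_ ?_ ?_ ?_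
        · simp only [Ne, Prod.mk.injEq, Fin.mk.injEq, not_and] <;> omega
        · rw [ladder_adj]; left; exact ⟨Or.inl (by simp only [Fin.val_mk] <;> omega), rfl⟩
        · rw [ladder_adj]; right; exact ⟨Or.inr rfl, rfl⟩
        · rw [ladder_adj]; left; exact ⟨Or.inl (by simp only [Fin.val_mk] <;> omega), rfl⟩
        · rw [ladder_adj]; right; exact ⟨Or.inr rfl, rfl⟩
        · simp only [Ne, Prod.mk.injEq, Fin.mk.injEq, not_and] <;> omega
        · simp only [Ne, Prod.mk.injEq, Fin.mk.injEq, not_and] <;> omega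
        · simp only [Ne, Prod.mk.injEq, Fin.mk.injEq, not_and] <;> omega
        · simp only [ladderDist, Fin.val_mk]; norm_num <;> split_ifs <;> omega
        · simp only [ladderDist, Fin.val_mk]; norm_num <;> split_ifs <;> omega
        · simp only [ladderDist, Fin.val_mk]; norm_num <;> split_ifs <;> omega
  · -- row 1
    rcases (show i % 3 = 1 ∨ i = n - 1 ∨ (i % 3 = 0 ∧ i ≠ n - 1) ∨ (i % 3 = 2 ∧ i ≠ n - 1)
        by omega) with h | h | ⟨h, hne⟩ | ⟨h, hne⟩
    · exact reach_self _ _ _ (by simp only [ladderDist, Fin.val_mk]; norm_num <;> split_ifs <;> omega)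
    · exact reach_self _ _ _ (by simp only [ladderDist, Fin.val_mk]; norm_num <;> split_ifs <;> omega)
    · -- strict move from (i,0),(i+1,1)
      have hb : i + 1 < n := by omega
      refine reach_one _ _ _ (⟨⟨i, hi⟩, ⟨0, h0⟩⟩) (⟨⟨i+1, hb⟩, ⟨1, h1⟩⟩) ?_ ?_ ?_ ?_ ?_
      · simp only [Ne, Prod.mk.injEq, Fin.mk.injEq, not_and] <;> omega
      · rw [ladder_adj]; right; exact ⟨Or.inl rfl, rfl⟩
      · rw [ladder_adj]; left; exact ⟨Or.inr (by simp only [Fin.val_mk] <;> omega), rfl⟩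
      · simp only [ladderDist, Fin.val_mk]; norm_num <;> split_ifs <;> omega
      · simp only [ladderDist, Fin.val_mk]; norm_num <;> split_ifs <;> omega
    · -- i % 3 = 2, i ≠ n-1
      have hb : i + 1 < n := by omega
      rcases (show i + 1 = n - 1 ∨ i + 2 < n by omega) with hc | hc
      · -- strict move from (i-1,1),(i+1,1)
        refine reach_one _ _ _ (⟨⟨i-1, by omega⟩, ⟨1, h1⟩⟩) (⟨⟨i+1, hb⟩, ⟨1, h1⟩⟩) ?_ ?_ ?_ ?_ ?_
        · simp only [Ne, Prod.mk.injEq, Fin.mk.injEq, not_and] <;> omega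
        · rw [ladder_adj]; left; exact ⟨Or.inl (by simp only [Fin.val_mk] <;> omega), rfl⟩
        · rw [ladder_adj]; left; exact ⟨Or.inr (by simp only [Fin.val_mk] <;> omega), rfl⟩
        · simp only [ladderDist, Fin.val_mk]; norm_num <;> split_ifs <;> omega
        · simp only [ladderDist, Fin.val_mk]; norm_num <;> split_ifs <;> omega
      · -- sources (i+1,0),(i+2,1) -> (i+1,1); then with (i-1,1) -> (i,1)
        refine reach_two _ _ _ (⟨⟨i+1, hb⟩, ⟨0, h0⟩⟩) (⟨⟨i+2, hc⟩, ⟨1, h1⟩⟩)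
          (⟨⟨i+1, hb⟩, ⟨1, h1⟩⟩) (⟨⟨i-1, by omega⟩, ⟨1, h1⟩⟩) ?_ ?_ ?_ ?_ ?_ ?_ ?_ ?_ ?_ ?_ ?_
        · simp only [Ne, Prod.mk.injEq, Fin.mk.injEq, not_and] <;> omega
        · rw [ladder_adj]; right; exact ⟨Or.inl rfl, rfl⟩
        · rw [ladder_adj]; left; exact ⟨Or.inr (by simp only [Fin.val_mk] <;> omega), rfl⟩
        · rw [ladder_adj]; left; exact ⟨Or.inr (by simp only [Fin.val_mk] <;> omega), rfl⟩
        · rw [ladder_adj]; left; exact ⟨Or.inl (by simp only [Fin.val_mk] <;> omega), rfl⟩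
        · simp only [Ne, Prod.mk.injEq, Fin.mk.injEq, not_and] <;> omega
        · simp only [Ne, Prod.mk.injEq, Fin.mk.injEq, not_and] <;> omega
        · simp only [Ne, Prod.mk.injEq, Fin.mk.injEq, not_and] <;> omega
        · simp only [ladderDist, Fin.val_mk]; norm_num <;> split_ifs <;> omega
        · simp only [ladderDist, Fin.val_mk]; norm_num <;> split_ifs <;> omega
        · simp only [ladderDist, Fin.val_mk]; norm_num <;> split_ifs <;> omega

lemma sumA (m : ℕ) : (∑ i ∈ Finset.range m, if i % 3 = 0 then 1 else 0) = (m + 2) / 3 := by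
  induction m with
  | zero => simp
  | succ m ih => rw [Finset.sum_range_succ, ih]; split_ifs with h <;> omega

lemma sumC (m : ℕ) : (∑ i ∈ Finset.range m, if i % 3 = 1 then 1 else 0) = (m + 1) / 3 := by
  induction m with
  | zero => simp
  | succ m ih => rw [Finset.sum_range_succ, ih]; split_ifs with h <;> omega

lemma sum_ladderDist (n : ℕ) (hn : 1 ≤ n) :
    ∑ v : Fin n × Fin 2, ladderDist n v = (n + 2) / 3 + n / 3 + 1 := by
  rw [Fintype.sum_prod_type]
  have : ∀ a : Fin n, ∑ b : Fin 2, ladderDist n (a, b) =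
      (if a.val % 3 = 0 then 1 else 0) + (if a.val % 3 = 1 ∨ a.val = n - 1 then 1 else 0) := by
    intro a
    rw [Fin.sum_univ_two]
    simp [ladderDist]
  rw [Finset.sum_congr rfl fun a _ => this a, Finset.sum_add_distrib]
  have e1 : (∑ a : Fin n, if a.val % 3 = 0 then 1 else 0) = (n + 2) / 3 := by
    rw [Fin.sum_univ_eq_sum_range (fun i => if i % 3 = 0 then 1 else 0)]
    exact sumA n
  have e2 : (∑ a : Fin n, if a.val % 3 = 1 ∨ a.val = n - 1 then 1 else 0) = n / 3 + 1 := by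
    rw [Fin.sum_univ_eq_sum_range (fun i => if i % 3 = 1 ∨ i = n - 1 then 1 else 0)]
    obtain ⟨m, rfl⟩ : ∃ m, n = m + 1 := ⟨n - 1, by omega⟩
    rw [Finset.sum_range_succ]
    have : ∀ i ∈ Finset.range m, (if i % 3 = 1 ∨ i = m + 1 - 1 then 1 else 0)
        = (if i % 3 = 1 then 1 else 0) := by
      intro i hi
      simp only [Finset.mem_range] at hi
      have : ¬ (i = m + 1 - 1) := by omega
      split_ifs <;> omega
    rw [Finset.sum_congr rfl this, sumC]
    have : ¬ ((m+1-1) % 3 = 1 ∨ m+1-1 = m+1-1) → False := fun h => h (Or.inr rfl)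
    split_ifs with hh
    · omega
    · omega
  rw [e1, e2]; ring


/-- Upper bound for the optimal rubbling number of the ladder `P_n □ P_2`. -/
theorem optRub_ladder_upper (n k r : ℕ) (hn : 1 ≤ n) (hdecomp : n = 3 * k + r) (hr : r < 3) :
    optRub (ladder n) ≤ if r = 0 then 1 + 2 * k else 2 + 2 * k := by
  have hle : optRub (ladder n) ≤ ∑ v : Fin n × Fin 2, ladderDist n v :=
    Nat.sInf_le ⟨ladderDist n, ladderDist_solvable n hn, rfl⟩
  rw [sum_ladderDist n hn] at hle
  split_ifs with h <;> omega
end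

section
/- The optimal rubbling number of the ladder P_3□P_2 equals 3. -/
open SimpleGraph

/- ### Auxiliary material for the proof -/

lemma step_weight {V : Type*} [DecidableEq V] [Fintype V] (G : SimpleGraph V)
    (w : V → ℕ) (hw : ∀ v u, G.Adj v u → w u ≤ 2 * w v) {p q : V → ℕ}
    (h : RubblingStep G p q) : ∑ x, q x * w x ≤ ∑ x, p x * w x := by
  rcases h with ⟨v, u, hadj, hpv, rfl⟩ | ⟨v, v', u, hvv, hadj1, hadj2, h1, h2, rfl⟩
  · have hne : v ≠ u := hadj.ne
    have hwu := hw v u hadj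
    have key : (∑ x, (fun x => if x = v then p x - 2 else if x = u then p x + 1 else p x) x * w x)
        + 2 * w v = (∑ x, p x * w x) + w u := by
      have e1 : 2 * w v = ∑ x, (if x = v then 2 * w x else 0) := by
        rw [Finset.sum_ite_eq' Finset.univ v]; simp
      have e2 : w u = ∑ x, (if x = u then w x else 0) := by
        rw [Finset.sum_ite_eq' Finset.univ u]; simp
      rw [e1, e2, ← Finset.sum_add_distrib, ← Finset.sum_add_distrib]
      apply Finset.sum_congr rfl
      intro x _
      by_cases hxv : x = v
      · subst hxv
        obtain ⟨k, hk⟩ := Nat.exists_eq_add_of_le hpv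
        simp [hne, hk]; ring
      · by_cases hxu : x = u
        · subst hxu; simp [hxv]; ring
        · simp [hxv, hxu]
    omega
  · have hne1 : u ≠ v := hadj1.ne'
    have hne2 : u ≠ v' := hadj2.ne'
    have hwu1 := hw v u hadj1
    have hwu2 := hw v' u hadj2
    have key : (∑ x, (fun x => if x = v then p x - 1 else if x = v' then p x - 1
          else if x = u then p x + 1 else p x) x * w x)
        + (w v + w v') = (∑ x, p x * w x) + w u := by
      have e1 : w v = ∑ x, (if x = v then w x else 0) := by
        rw [Finset.sum_ite_eq' Finset.univ v]; simp
      have e2 : w v' = ∑ x, (if x = v' then w x else 0) := by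
        rw [Finset.sum_ite_eq' Finset.univ v']; simp
      have e3 : w u = ∑ x, (if x = u then w x else 0) := by
        rw [Finset.sum_ite_eq' Finset.univ u]; simp
      rw [e1, e2, e3, ← Finset.sum_add_distrib, ← Finset.sum_add_distrib,
        ← Finset.sum_add_distrib]
      apply Finset.sum_congr rfl
      intro x _
      by_cases hxv : x = v
      · subst hxv
        obtain ⟨k, hk⟩ := Nat.exists_eq_add_of_le h1
        simp [hvv, Ne.symm hne1, hk]; ring
      · by_cases hxv' : x = v'
        · subst hxv'
          obtain ⟨k, hk⟩ := Nat.exists_eq_add_of_le h2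
          simp [hxv, Ne.symm hne2, hk]; ring
        · by_cases hxu : x = u
          · subst hxu; simp [hxv, hxv']; ring
          · simp [hxv, hxv', hxu]
    omega

lemma reach_weight {V : Type*} [DecidableEq V] [Fintype V] (G : SimpleGraph V)
    (w : V → ℕ) (hw : ∀ v u, G.Adj v u → w u ≤ 2 * w v) {p q : V → ℕ}
    (h : RubblingReach G p q) : ∑ x, q x * w x ≤ ∑ x, p x * w x := by
  induction h with
  | refl => exact le_rfl
  | tail _ hstep ih => exact le_trans (step_weight G w hw hstep) ih

lemma kreach_weight {V : Type*} [DecidableEq V] [Fintype V] (G : SimpleGraph V)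
    (w : V → ℕ) (hw : ∀ v u, G.Adj v u → w u ≤ 2 * w v) {p : V → ℕ} {u : V}
    (h : KReachable G p u 1) : w u ≤ ∑ x, p x * w x := by
  obtain ⟨q, hq, h1⟩ := h
  calc w u = 1 * w u := (one_mul _).symm
    _ ≤ q u * w u := Nat.mul_le_mul_right _ h1
    _ ≤ ∑ x, q x * w x := Finset.single_le_sum (f := fun x => q x * w x) (fun i _ => Nat.zero_le _) (Finset.mem_univ u)
    _ ≤ ∑ x, p x * w x := reach_weight G w hw hq

/-- Corner weight functions (weights `2^(3 - dist)` from each of the four corners). -/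
def W1 : Fin 3 × Fin 2 → ℕ := fun x => ![![8,4],![4,2],![2,1]] x.1 x.2
def W2 : Fin 3 × Fin 2 → ℕ := fun x => ![![2,1],![4,2],![8,4]] x.1 x.2
def W3 : Fin 3 × Fin 2 → ℕ := fun x => ![![4,8],![2,4],![1,2]] x.1 x.2
def W4 : Fin 3 × Fin 2 → ℕ := fun x => ![![1,2],![2,4],![4,8]] x.1 x.2

lemma W1cond : ∀ v u : Fin 3 × Fin 2, (ladder 3).Adj v u → W1 u ≤ 2 * W1 v := by
  intro v u h
  fin_cases v <;> fin_cases u <;> simp_all [ladder, pathGraph_adj, W1]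
lemma W2cond : ∀ v u : Fin 3 × Fin 2, (ladder 3).Adj v u → W2 u ≤ 2 * W2 v := by
  intro v u h
  fin_cases v <;> fin_cases u <;> simp_all [ladder, pathGraph_adj, W2]
lemma W3cond : ∀ v u : Fin 3 × Fin 2, (ladder 3).Adj v u → W3 u ≤ 2 * W3 v := by
  intro v u h
  fin_cases v <;> fin_cases u <;> simp_all [ladder, pathGraph_adj, W3]
lemma W4cond : ∀ v u : Fin 3 × Fin 2, (ladder 3).Adj v u → W4 u ≤ 2 * W4 v := by
  intro v u h
  fin_cases v <;> fin_cases u <;> simp_all [ladder, pathGraph_adj, W4]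

/-- The witness distribution of size 3: two pebbles at `(1,0)`, one at `(1,1)`. -/
def P0 : Fin 3 × Fin 2 → ℕ := fun x => if x = (1,0) then 2 else if x = (1,1) then 1 else 0

def Q0 : Fin 3 × Fin 2 → ℕ :=
  fun x => if x = (1,0) then P0 x - 2 else if x = (1,1) then P0 x + 1 else P0 x

lemma adj10_00 : (ladder 3).Adj (1,0) (0,0) := by simp [ladder, pathGraph_adj]
lemma adj10_20 : (ladder 3).Adj (1,0) (2,0) := by simp [ladder, pathGraph_adj]
lemma adj10_11 : (ladder 3).Adj (1,0) (1,1) := by simp [ladder, pathGraph_adj]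
lemma adj11_01 : (ladder 3).Adj (1,1) (0,1) := by simp [ladder, pathGraph_adj]
lemma adj11_21 : (ladder 3).Adj (1,1) (2,1) := by simp [ladder, pathGraph_adj]

lemma P0_solvable : Solvable (ladder 3) P0 := by
  intro u
  have stepQ0 : RubblingStep (ladder 3) P0 Q0 :=
    Or.inl ⟨(1,0), (1,1), adj10_11, by decide, rfl⟩
  fin_cases u
  · -- (0,0)
    exact ⟨_, Relation.ReflTransGen.single
      (Or.inl ⟨(1,0), (0,0), adj10_00, by decide, rfl⟩), by decide⟩
  · -- (0,1)
    exact ⟨_, Relation.ReflTransGen.head stepQ0 (Relation.ReflTransGen.single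
      (Or.inl ⟨(1,1), (0,1), adj11_01, by decide, rfl⟩)), by decide⟩
  · -- (1,0)
    exact ⟨P0, Relation.ReflTransGen.refl, by decide⟩
  · -- (1,1)
    exact ⟨P0, Relation.ReflTransGen.refl, by decide⟩
  · -- (2,0)
    exact ⟨_, Relation.ReflTransGen.single
      (Or.inl ⟨(1,0), (2,0), adj10_20, by decide, rfl⟩), by decide⟩
  · -- (2,1)
    exact ⟨_, Relation.ReflTransGen.head stepQ0 (Relation.ReflTransGen.single
      (Or.inl ⟨(1,1), (2,1), adj11_21, by decide, rfl⟩)), by decide⟩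

/-- The optimal rubbling number of the ladder `P_3 □ P_2` is 3. -/
theorem optRub_ladder_three : optRub (ladder 3) = 3 := by
  have h3 : (3 : ℕ) ∈ {m | ∃ p : Fin 3 × Fin 2 → ℕ, Solvable (ladder 3) p ∧ ∑ v, p v = m} :=
    ⟨P0, P0_solvable, by decide⟩
  apply le_antisymm
  · exact Nat.sInf_le h3
  · apply le_csInf ⟨3, h3⟩
    rintro m ⟨p, hsolv, rfl⟩
    by_contra hlt
    push_neg at hlt
    have hsum : ∑ v, p v ≤ 2 := by omega
    have b1 := kreach_weight (ladder 3) W1 W1cond (hsolv (0,0))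
    have b2 := kreach_weight (ladder 3) W2 W2cond (hsolv (2,0))
    have b3 := kreach_weight (ladder 3) W3 W3cond (hsolv (0,1))
    have b4 := kreach_weight (ladder 3) W4 W4cond (hsolv (2,1))
    simp [W1, Fintype.sum_prod_type, Fin.sum_univ_succ] at b1
    simp [W2, Fintype.sum_prod_type, Fin.sum_univ_succ] at b2
    simp [W3, Fintype.sum_prod_type, Fin.sum_univ_succ] at b3
    simp [W4, Fintype.sum_prod_type, Fin.sum_univ_succ] at b4
    simp [Fintype.sum_prod_type, Fin.sum_univ_succ] at hsum
    omega
end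

section
/- For every pebble distribution p on the ladder P_n□P_2 and every vertex x, one has L_p(x) = ⌊Lw_p(x)⌋ and R_p(x) = ⌊Rw_p(x)⌋. -/
open SimpleGraph

/-- A rubbling move all of whose vertices lie in the set `S`. -/
def RubblingStepOn {V : Type*} [DecidableEq V] (G : SimpleGraph V) (S : Set V)
    (p q : V → ℕ) : Prop :=
  (∃ v u, v ∈ S ∧ u ∈ S ∧ G.Adj v u ∧ 2 ≤ p v ∧
      q = fun x => if x = v then p x - 2 else if x = u then p x + 1 else p x) ∨
  (∃ v w u, v ∈ S ∧ w ∈ S ∧ u ∈ S ∧ v ≠ w ∧ G.Adj v u ∧ G.Adj w u ∧ 1 ≤ p v ∧ 1 ≤ p w ∧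
      q = fun x => if x = v then p x - 1 else if x = w then p x - 1
          else if x = u then p x + 1 else p x)

/-- `q` is obtainable from `p` by an executable rubbling sequence all of whose
moves act only on vertices of `S`. -/
def RubblingReachOn {V : Type*} [DecidableEq V] (G : SimpleGraph V) (S : Set V) :
    (V → ℕ) → (V → ℕ) → Prop :=
  Relation.ReflTransGen (RubblingStepOn G S)

/-- `x` is left `k`-reachable: `k`-reachable from the restriction of `p` inside the
induced subgraph on the columns up to the column of `x`. -/
def LeftKReachable (n : ℕ) (p : Fin n × Fin 2 → ℕ) (x : Fin n × Fin 2) (k : ℕ) : Prop :=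
  ∃ q, RubblingReachOn (ladder n) {v | v.1 ≤ x.1}
      (fun v => if v.1 ≤ x.1 then p v else 0) q ∧ k ≤ q x

/-- `x` is right `k`-reachable: `k`-reachable from the restriction of `p` inside the
induced subgraph on the columns from the column of `x` onwards. -/
def RightKReachable (n : ℕ) (p : Fin n × Fin 2 → ℕ) (x : Fin n × Fin 2) (k : ℕ) : Prop :=
  ∃ q, RubblingReachOn (ladder n) {v | x.1 ≤ v.1}
      (fun v => if x.1 ≤ v.1 then p v else 0) q ∧ k ≤ q x

/-- `L_p(x)`: the largest `k` for which `x` is left `k`-reachable. -/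
noncomputable def Lnum (n : ℕ) (p : Fin n × Fin 2 → ℕ) (x : Fin n × Fin 2) : ℕ :=
  sSup {k | LeftKReachable n p x k}

/-- `R_p(x)`: the largest `k` for which `x` is right `k`-reachable. -/
noncomputable def Rnum (n : ℕ) (p : Fin n × Fin 2 → ℕ) (x : Fin n × Fin 2) : ℕ :=
  sSup {k | RightKReachable n p x k}

/-- The left weight function `Lw_p(x) = Σ_{v in columns ≤ col(x)} (1/2)^{d(x,v)} p(v)`. -/
noncomputable def Lw (n : ℕ) (p : Fin n × Fin 2 → ℕ) (x : Fin n × Fin 2) : ℝ :=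
  ∑ v : Fin n × Fin 2,
    if v.1 ≤ x.1 then ((1 : ℝ) / 2) ^ ((ladder n).dist x v) * (p v : ℝ) else 0

/-- The right weight function. -/
noncomputable def Rw (n : ℕ) (p : Fin n × Fin 2 → ℕ) (x : Fin n × Fin 2) : ℝ :=
  ∑ v : Fin n × Fin 2,
    if x.1 ≤ v.1 then ((1 : ℝ) / 2) ^ ((ladder n).dist x v) * (p v : ℝ) else 0

/-!
Upper bound: under a rubbling move the weight `∑ v, 2 ^ (-d(x, v)) * q v` cannot increase, since
the target of a move is at most one step further from `x` than each of its sources; and `q x` is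
at most this weight.

Lower bound: sweep the columns from the left towards the row `r` of `x`. At column `m + 1`, pebble
everything from `(m, r)` and from `(m + 1, r')` onto `(m + 1, r)`, first spending a leftover odd
pebble on `(m, r)` together with one on `(m + 1, r')` in a strict rubbling move. Since
`Lw (m + 1, r) = Lw (m, r) / 2 + p (m + 1, r) + p (m + 1, r') / 2`, the invariant
`Lw (m, r) < q (m, r) + 1` survives each column.

The right-hand statement is the left-hand one for the reflected ladder.
-/

section Rubbling

variable {V : Type*} [DecidableEq V] {G : SimpleGraph V} {S T : Set V} {p q : V → ℕ}

theorem RubblingStepOn.mono (hST : S ⊆ T) (h : RubblingStepOn G S p q) :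
    RubblingStepOn G T p q := by
  rcases h with ⟨v, u, hv, hu, h⟩ | ⟨v, w, u, hv, hw, hu, h⟩
  · exact Or.inl ⟨v, u, hST hv, hST hu, h⟩
  · exact Or.inr ⟨v, w, u, hST hv, hST hw, hST hu, h⟩

theorem RubblingReachOn.mono (hST : S ⊆ T) (h : RubblingReachOn G S p q) :
    RubblingReachOn G T p q :=
  Relation.ReflTransGen.mono (fun _ _ => RubblingStepOn.mono hST) _ _ h

theorem exists_rubblingStepOn_pebble {v u : V} (hv : v ∈ S) (hu : u ∈ S) (h : G.Adj v u)
    (hp : 2 ≤ p v) :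
    ∃ q, RubblingStepOn G S p q ∧ q v = p v - 2 ∧ q u = p u + 1 ∧
      ∀ y, y ≠ v → y ≠ u → q y = p y :=
  ⟨_, Or.inl ⟨v, u, hv, hu, h, hp, rfl⟩, by simp, by simp [h.ne.symm],
    fun y hyv hyu => by simp [hyv, hyu]⟩

theorem exists_rubblingStepOn_strict {v w u : V} (hv : v ∈ S) (hw : w ∈ S) (hu : u ∈ S)
    (hvw : v ≠ w) (hvu : G.Adj v u) (hwu : G.Adj w u) (hpv : 1 ≤ p v) (hpw : 1 ≤ p w) :
    ∃ q, RubblingStepOn G S p q ∧ q w = p w - 1 ∧ q u = p u + 1 ∧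
      ∀ y, y ≠ v → y ≠ w → y ≠ u → q y = p y :=
  ⟨_, Or.inr ⟨v, w, u, hv, hw, hu, hvw, hvu, hwu, hpv, hpw, rfl⟩, by simp [hvw.symm],
    by simp [hvu.ne.symm, hwu.ne.symm], fun y hyv hyw hyu => by simp [hyv, hyw, hyu]⟩

theorem exists_rubblingReachOn_pebble_repeatedly {v u : V} (hv : v ∈ S) (hu : u ∈ S)
    (h : G.Adj v u) (p : V → ℕ) :
    ∃ q, RubblingReachOn G S p q ∧ q v = p v % 2 ∧ q u = p u + p v / 2 ∧
      ∀ y, y ≠ v → y ≠ u → q y = p y := by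
  induction hk : p v / 2 generalizing p with
  | zero => exact ⟨p, .refl, by omega, by omega, fun _ _ _ => rfl⟩
  | succ k ih =>
    obtain ⟨p₁, h₁, h₁v, h₁u, h₁o⟩ := exists_rubblingStepOn_pebble hv hu h (p := p) (by omega)
    obtain ⟨q, hq, hqv, hqu, hqo⟩ := ih p₁ (by omega)
    refine ⟨q, .head h₁ hq, by omega, by omega, fun y hyv hyu => ?_⟩
    rw [hqo y hyv hyu, h₁o y hyv hyu]

/-- Counting a pebble on `a` or `c` as half a pebble on `b`, gathering onto `b` loses at most
half a pebble. -/
theorem exists_rubblingReachOn_gather {a b c : V} (ha : a ∈ S) (hb : b ∈ S) (hc : c ∈ S)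
    (hab : G.Adj a b) (hcb : G.Adj c b) (hac : a ≠ c) (p : V → ℕ) :
    ∃ q, RubblingReachOn G S p q ∧ p a + 2 * p b + p c ≤ 2 * q b + 1 ∧
      ∀ y, y ≠ a → y ≠ b → y ≠ c → q y = p y := by
  obtain ⟨p₁, h₁, h₁a, h₁b, h₁o⟩ := exists_rubblingReachOn_pebble_repeatedly ha hb hab p
  have h₁c : p₁ c = p c := h₁o c hac.symm hcb.ne
  by_cases hstray : p₁ a = 1 ∧ 1 ≤ p₁ c
  · obtain ⟨p₂, h₂, h₂c, h₂b, h₂o⟩ :=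
      exists_rubblingStepOn_strict ha hc hb hac hab hcb hstray.1.ge hstray.2
    obtain ⟨q, h₃, -, h₃b, h₃o⟩ := exists_rubblingReachOn_pebble_repeatedly hc hb hcb p₂
    refine ⟨q, h₁.trans (.head h₂ h₃), by omega, fun y hya hyb hyc => ?_⟩
    rw [h₃o y hyc hyb, h₂o y hya hyc hyb, h₁o y hya hyb]
  · obtain ⟨q, h₂, -, h₂b, h₂o⟩ := exists_rubblingReachOn_pebble_repeatedly hc hb hcb p₁
    refine ⟨q, h₁.trans h₂, by omega, fun y hya hyb hyc => ?_⟩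
    rw [h₂o y hyc hyb, h₁o y hya hyb]

theorem RubblingStepOn.comap_iso {W : Type*} [DecidableEq W] {H : SimpleGraph W} (φ : G ≃g H)
    {S : Set W} {p q : W → ℕ} (h : RubblingStepOn H S p q) :
    RubblingStepOn G (φ ⁻¹' S) (p ∘ φ) (q ∘ φ) := by
  rcases h with ⟨v, u, hv, hu, hvu, hp, rfl⟩ |
    ⟨v, w, u, hv, hw, hu, hvw, hvu, hwu, hpv, hpw, rfl⟩
  · refine Or.inl ⟨φ.symm v, φ.symm u, by simpa, by simpa, φ.symm.map_adj_iff.2 hvu,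
      by simpa, ?_⟩
    funext y
    simp [RelIso.eq_symm_apply]
  · refine Or.inr ⟨φ.symm v, φ.symm w, φ.symm u, by simpa, by simpa, by simpa, by simpa,
      φ.symm.map_adj_iff.2 hvu, φ.symm.map_adj_iff.2 hwu, by simpa, by simpa, ?_⟩
    funext y
    simp [RelIso.eq_symm_apply]

theorem RubblingReachOn.comap_iso {W : Type*} [DecidableEq W] {H : SimpleGraph W} (φ : G ≃g H)
    {S : Set W} {p q : W → ℕ} (h : RubblingReachOn H S p q) :
    RubblingReachOn G (φ ⁻¹' S) (p ∘ φ) (q ∘ φ) :=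
  Relation.ReflTransGen.lift (· ∘ φ) (fun _ _ => RubblingStepOn.comap_iso φ) _ _ h

end Rubbling

section Weight

variable {V : Type*} {G : SimpleGraph V}

theorem half_pow_dist_le_of_adj {v u : V} (h : G.Adj v u) (x : V) :
    ((1 : ℝ) / 2) ^ G.dist x u ≤ 2 * ((1 : ℝ) / 2) ^ G.dist x v := by
  have hd : G.dist x v ≤ G.dist x u + 1 := by
    rcases h.symm.diff_dist_adj (u := x) with h | h | h <;> omega
  calc ((1 : ℝ) / 2) ^ G.dist x u = 2 * ((1 : ℝ) / 2) ^ (G.dist x u + 1) := by ring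
    _ ≤ 2 * ((1 : ℝ) / 2) ^ G.dist x v :=
      mul_le_mul_of_nonneg_left (pow_le_pow_of_le_one (by norm_num) (by norm_num) hd) zero_le_two

variable [Fintype V]

noncomputable def pebbleWeight (G : SimpleGraph V) (x : V) (p : V → ℕ) : ℝ :=
  ∑ v, ((1 : ℝ) / 2) ^ G.dist x v * (p v : ℝ)

theorem natCast_le_pebbleWeight (G : SimpleGraph V) (x : V) (p : V → ℕ) :
    (p x : ℝ) ≤ pebbleWeight G x p := by
  simpa [pebbleWeight] using Finset.single_le_sum
    (f := fun v => ((1 : ℝ) / 2) ^ G.dist x v * (p v : ℝ)) (fun v _ => by positivity)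
    (Finset.mem_univ x)

theorem pebbleWeight_ite (G : SimpleGraph V) (x : V) (s : V → Prop) [DecidablePred s]
    (p : V → ℕ) :
    pebbleWeight G x (fun v => if s v then p v else 0) =
      ∑ v, if s v then ((1 : ℝ) / 2) ^ G.dist x v * (p v : ℝ) else 0 :=
  Finset.sum_congr rfl fun v _ => by by_cases h : s v <;> simp [h]

variable [DecidableEq V] {S : Set V} {p q : V → ℕ}

theorem RubblingStepOn.pebbleWeight_le (h : RubblingStepOn G S p q) (x : V) :
    pebbleWeight G x q ≤ pebbleWeight G x p := by
  unfold pebbleWeight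
  rcases h with ⟨v, u, -, -, hvu, hp, rfl⟩ | ⟨v, w, u, -, -, -, hvw, hvu, hwu, hpv, hpw, rfl⟩
  · have hq : ∀ y, ((if y = v then p y - 2 else if y = u then p y + 1 else p y : ℕ) : ℝ) =
        p y - (if y = v then 2 else 0) + (if y = u then 1 else 0) := by
      intro y
      by_cases hyv : y = v
      · subst hyv; simp [hvu.ne, Nat.cast_sub hp]
      · by_cases hyu : y = u <;> simp [hyv, hyu, hvu.ne.symm]
    simp only [hq, mul_add, mul_sub, Finset.sum_add_distrib, Finset.sum_sub_distrib, mul_ite,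
      mul_zero, Finset.sum_ite_eq', Finset.mem_univ, if_true]
    linarith [half_pow_dist_le_of_adj hvu x]
  · have hq : ∀ y, ((if y = v then p y - 1 else if y = w then p y - 1
          else if y = u then p y + 1 else p y : ℕ) : ℝ) =
        p y - (if y = v then 1 else 0) - (if y = w then 1 else 0) + (if y = u then 1 else 0) := by
      intro y
      by_cases hyv : y = v
      · subst hyv; simp [hvu.ne, hvw, Nat.cast_sub hpv]
      · by_cases hyw : y = w
        · subst hyw; simp [hwu.ne, hyv, Nat.cast_sub hpw]
        · by_cases hyu : y = u <;> simp [hyv, hyw, hyu, hvu.ne.symm, hwu.ne.symm]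
    simp only [hq, mul_add, mul_sub, Finset.sum_add_distrib, Finset.sum_sub_distrib, mul_ite,
      mul_zero, Finset.sum_ite_eq', Finset.mem_univ, if_true]
    linarith [half_pow_dist_le_of_adj hvu x, half_pow_dist_le_of_adj hwu x]

theorem RubblingReachOn.pebbleWeight_le (h : RubblingReachOn G S p q) (x : V) :
    pebbleWeight G x q ≤ pebbleWeight G x p := by
  induction h with
  | refl => exact le_rfl
  | tail _ hstep ih => exact (hstep.pebbleWeight_le x).trans ih

end Weight

theorem natCast_sSup_eq_floor {P : ℕ → Prop} {w : ℝ} (hfloor : P ⌊w⌋₊)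
    (hle : ∀ k, P k → (k : ℝ) ≤ w) : ((sSup {k | P k} : ℕ) : ℤ) = ⌊w⌋ := by
  have hw : 0 ≤ w := (Nat.cast_nonneg _).trans (hle _ hfloor)
  have hgreatest : IsGreatest {k | P k} ⌊w⌋₊ := ⟨hfloor, fun k hk => Nat.le_floor (hle k hk)⟩
  rw [hgreatest.csSup_eq]
  exact Int.natCast_floor_eq_floor hw

theorem Fin.eq_or_eq_rev_of_two (r s : Fin 2) : s = r ∨ s = r.rev := by
  fin_cases r <;> fin_cases s <;> decide

theorem Fin.rev_ne_self_of_two (r : Fin 2) : r.rev ≠ r := by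
  fin_cases r <;> decide

section Ladder

variable {n : ℕ}

theorem pathGraph_dist (a b : Fin n) : (pathGraph n).dist a b = (a : ℕ) - b + (b - a) := by
  refine le_antisymm ?_ ?_
  · wlog hab : a ≤ b generalizing a b
    · have := this b a (le_of_not_ge hab)
      rw [dist_comm]; omega
    suffices ∀ k (b : Fin n), (a : ℕ) + k = b → (pathGraph n).dist a b ≤ k by
      have := this (b - a) b (by rw [Fin.le_def] at hab; omega)
      omega
    intro k
    induction k with
    | zero => intro b hb; simp [Fin.ext (by omega : (a : ℕ) = b)]
    | succ k ih =>
      intro b hb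
      have hadj : (pathGraph n).Adj ⟨a + k, by omega⟩ b := by rw [pathGraph_adj]; simp; omega
      have := ih ⟨a + k, by omega⟩ rfl
      rcases hadj.diff_dist_adj (u := a) with h | h | h <;> omega
  · obtain ⟨w, hw⟩ := (pathGraph_preconnected n a b).exists_walk_length_eq_dist
    rw [← hw]
    clear hw
    induction w with
    | nil => simp
    | cons h w ih => rw [pathGraph_adj] at h; rw [Walk.length_cons]; omega

theorem ladder_dist (x v : Fin n × Fin 2) :
    (ladder n).dist x v = (x.1 : ℕ) - v.1 + (v.1 - x.1) + if x.2 = v.2 then 0 else 1 := by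
  have hreach : (ladder n).Reachable x v :=
    reachable_boxProd.2 ⟨pathGraph_preconnected n _ _, pathGraph_preconnected 2 _ _⟩
  rw [← Nat.cast_inj (R := ℕ∞), hreach.coe_dist_eq_edist, ladder, edist_boxProd,
    ← (pathGraph_preconnected n _ _).coe_dist_eq_edist, pathGraph_dist, pathGraph_two_eq_top,
    edist_top]
  split_ifs <;> simp

theorem ladder_adj_rung {m : Fin n} {r s : Fin 2} (h : r ≠ s) :
    (ladder n).Adj (m, r) (m, s) := by
  rwa [ladder, boxProd_adj_right, pathGraph_two_eq_top, top_adj]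

theorem ladder_adj_castSucc_succ (i : Fin n) (r : Fin 2) :
    (ladder (n + 1)).Adj (i.castSucc, r) (i.succ, r) := by
  rw [ladder, boxProd_adj_left, pathGraph_adj]; simp

theorem Lw_eq_add_sum_lt (p : Fin n × Fin 2 → ℕ) (m : Fin n) (r : Fin 2) :
    Lw n p (m, r) = p (m, r) + p (m, r.rev) / 2 +
      ∑ v : Fin n × Fin 2,
        if v.1 < m then ((1 : ℝ) / 2) ^ (ladder n).dist (m, r) v * (p v : ℝ) else 0 := by
  have key : ∀ v : Fin n × Fin 2,
      (if v.1 ≤ m then ((1 : ℝ) / 2) ^ (ladder n).dist (m, r) v * (p v : ℝ) else 0) =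
        (if v = (m, r) then (p v : ℝ) else 0) + (if v = (m, r.rev) then (p v : ℝ) / 2 else 0) +
        (if v.1 < m then ((1 : ℝ) / 2) ^ (ladder n).dist (m, r) v * (p v : ℝ) else 0) := by
    rintro ⟨c, s⟩
    rcases lt_trichotomy c m with hc | rfl | hc
    · simp [hc.le, hc, hc.ne]
    · rcases Fin.eq_or_eq_rev_of_two r s with rfl | rfl
      · simp [(Fin.rev_ne_self_of_two s).symm]
      · simp [ladder_dist, Fin.rev_ne_self_of_two r, (Fin.rev_ne_self_of_two r).symm]; ring
    · simp [hc.not_ge, hc.ne', hc.not_gt]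
  rw [Lw, Finset.sum_congr rfl fun v _ => key v]
  simp [Finset.sum_add_distrib]

theorem Lw_zero (p : Fin (n + 1) × Fin 2 → ℕ) (r : Fin 2) :
    Lw (n + 1) p (0, r) = p (0, r) + p (0, r.rev) / 2 := by
  simp [Lw_eq_add_sum_lt]

theorem Lw_succ (p : Fin (n + 1) × Fin 2 → ℕ) (i : Fin n) (r : Fin 2) :
    Lw (n + 1) p (i.succ, r) =
      p (i.succ, r) + p (i.succ, r.rev) / 2 + Lw (n + 1) p (i.castSucc, r) / 2 := by
  rw [Lw_eq_add_sum_lt, Lw, Finset.sum_div]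
  congr 1
  refine Finset.sum_congr rfl fun v _ => ?_
  by_cases h : v.1 ≤ i.castSucc
  · rw [if_pos (Fin.le_castSucc_iff.1 h), if_pos h]
    have hd : (ladder (n + 1)).dist (i.succ, r) v =
        (ladder (n + 1)).dist (i.castSucc, r) v + 1 := by
      rw [Fin.le_def] at h
      simp only [ladder_dist, Fin.val_succ, Fin.val_castSucc] at h ⊢
      omega
    rw [hd, pow_succ]; ring
  · rw [if_neg (mt Fin.le_castSucc_iff.2 h), if_neg h, zero_div]

theorem exists_rubblingReachOn_Lw_lt (p : Fin (n + 1) × Fin 2 → ℕ) (r : Fin 2)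
    (m : Fin (n + 1)) :
    ∃ q, RubblingReachOn (ladder (n + 1)) {v | v.1 ≤ m} p q ∧ (∀ v, m < v.1 → q v = p v) ∧
      Lw (n + 1) p (m, r) < q (m, r) + 1 := by
  induction m using Fin.induction with
  | zero =>
    obtain ⟨q, hq, -, hqr, hqo⟩ := exists_rubblingReachOn_pebble_repeatedly
      (S := {v | v.1 ≤ 0}) (Set.mem_ofPred.2 le_rfl) (Set.mem_ofPred.2 le_rfl)
      (ladder_adj_rung (m := 0) (Fin.rev_ne_self_of_two r)) p
    refine ⟨q, hq, fun v hv => hqo v (by rintro rfl; exact hv.false)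
      (by rintro rfl; exact hv.false), ?_⟩
    have hhalf : (p (0, r.rev) : ℝ) < 2 * ((p (0, r.rev) / 2 : ℕ) : ℝ) + 2 := by
      exact_mod_cast (by omega : p (0, r.rev) < 2 * (p (0, r.rev) / 2) + 2)
    rw [Lw_zero, hqr]; push_cast; linarith
  | succ i ih =>
    obtain ⟨q, hq, hqo, hlt⟩ := ih
    have hi : i.castSucc < i.succ := Fin.castSucc_lt_succ
    obtain ⟨q', hq', hgather, hq'o⟩ := exists_rubblingReachOn_gather
      (S := {v | v.1 ≤ i.succ}) (Set.mem_ofPred.2 hi.le) (Set.mem_ofPred.2 le_rfl)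
      (Set.mem_ofPred.2 le_rfl) (ladder_adj_castSucc_succ i r)
      (ladder_adj_rung (Fin.rev_ne_self_of_two r)) (by simp [hi.ne]) q
    refine ⟨q', (hq.mono fun v hv => le_trans hv hi.le).trans hq', fun v hv => ?_, ?_⟩
    · rw [hq'o v (by rintro rfl; exact (hi.trans hv).false) (by rintro rfl; exact hv.false)
        (by rintro rfl; exact hv.false), hqo v (hi.trans hv)]
    · have hgather' : (q (i.castSucc, r) + 2 * q (i.succ, r) + q (i.succ, r.rev) : ℝ) ≤
          2 * q' (i.succ, r) + 1 := by exact_mod_cast hgather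
      rw [Lw_succ, ← hqo _ hi, ← hqo (i.succ, r.rev) hi]
      linarith

theorem leftKReachable_floor_Lw (p : Fin n × Fin 2 → ℕ) (x : Fin n × Fin 2) :
    LeftKReachable n p x ⌊Lw n p x⌋₊ := by
  cases n with
  | zero => exact x.1.elim0
  | succ n =>
    obtain ⟨q, hq, -, hlt⟩ := exists_rubblingReachOn_Lw_lt
      (fun v => if v.1 ≤ x.1 then p v else 0) x.2 x.1
    have hLw : Lw (n + 1) (fun v => if v.1 ≤ x.1 then p v else 0) x = Lw (n + 1) p x :=
      Finset.sum_congr rfl fun v _ => by by_cases h : v.1 ≤ x.1 <;> simp [h]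
    rw [Prod.mk.eta, hLw] at hlt
    exact ⟨q, hq, Nat.lt_add_one_iff.1
      ((Nat.floor_lt' (Nat.succ_ne_zero _)).2 (by exact_mod_cast hlt))⟩

def ladderReflect : ladder n ≃g ladder n where
  toEquiv := Fin.revPerm.prodCongr (Equiv.refl (Fin 2))
  map_rel_iff' := by
    rintro ⟨a, r⟩ ⟨b, s⟩
    simp only [ladder, boxProd_adj, pathGraph_adj, Equiv.prodCongr_apply, Prod.map,
      Fin.revPerm_apply, Equiv.refl_apply, Fin.val_rev, Fin.rev_inj]
    omega

@[simp]
theorem ladderReflect_apply (v : Fin n × Fin 2) : ladderReflect v = (v.1.rev, v.2) := rfl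

@[simp]
theorem ladder_dist_rev (x v : Fin n × Fin 2) :
    (ladder n).dist (x.1.rev, x.2) (v.1.rev, v.2) = (ladder n).dist x v := by
  have := x.1.isLt
  have := v.1.isLt
  simp only [ladder_dist, Fin.val_rev]
  omega

theorem Rw_eq_Lw_ladderReflect (p : Fin n × Fin 2 → ℕ) (x : Fin n × Fin 2) :
    Rw n p x = Lw n (p ∘ ladderReflect) (ladderReflect x) := by
  refine Fintype.sum_equiv ladderReflect.toEquiv _ _ fun v => ?_
  simp [Fin.rev_le_rev]

theorem LeftKReachable.rightKReachable {p : Fin n × Fin 2 → ℕ} {x : Fin n × Fin 2} {k : ℕ}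
    (h : LeftKReachable n (p ∘ ladderReflect) (ladderReflect x) k) : RightKReachable n p x k := by
  obtain ⟨q, hq, hk⟩ := h
  refine ⟨q ∘ ladderReflect, ?_, hk⟩
  convert hq.comap_iso ladderReflect using 1
  · ext v; simp [Fin.rev_le_rev]
  · funext v; simp [Fin.rev_le_rev]

theorem LeftKReachable.le_Lw {p : Fin n × Fin 2 → ℕ} {x : Fin n × Fin 2} {k : ℕ}
    (h : LeftKReachable n p x k) : (k : ℝ) ≤ Lw n p x := by
  obtain ⟨q, hq, hk⟩ := h
  calc (k : ℝ) ≤ q x := by exact_mod_cast hk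
    _ ≤ pebbleWeight (ladder n) x q := natCast_le_pebbleWeight _ _ _
    _ ≤ _ := hq.pebbleWeight_le x
    _ = Lw n p x := pebbleWeight_ite _ _ _ _

theorem RightKReachable.le_Rw {p : Fin n × Fin 2 → ℕ} {x : Fin n × Fin 2} {k : ℕ}
    (h : RightKReachable n p x k) : (k : ℝ) ≤ Rw n p x := by
  obtain ⟨q, hq, hk⟩ := h
  calc (k : ℝ) ≤ q x := by exact_mod_cast hk
    _ ≤ pebbleWeight (ladder n) x q := natCast_le_pebbleWeight _ _ _
    _ ≤ _ := hq.pebbleWeight_le x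
    _ = Rw n p x := pebbleWeight_ite _ _ _ _

end Ladder

/-- `L_p(x) = ⌊Lw_p(x)⌋` and `R_p(x) = ⌊Rw_p(x)⌋`. -/
theorem weight_floor (n : ℕ) (p : Fin n × Fin 2 → ℕ) (x : Fin n × Fin 2) :
    (Lnum n p x : ℤ) = ⌊Lw n p x⌋ ∧ (Rnum n p x : ℤ) = ⌊Rw n p x⌋ := by
  refine ⟨natCast_sSup_eq_floor (leftKReachable_floor_Lw p x) fun _ hk => hk.le_Lw,
    natCast_sSup_eq_floor ?_ fun _ hk => hk.le_Rw⟩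
  rw [Rw_eq_Lw_ladderReflect]
  exact (leftKReachable_floor_Lw _ _).rightKReachable
end

section
/- Let n ≥ 3 and let p be a pebble distribution on the ladder P_n□P_2 such that every P_3□P_2 subgraph (three consecutive columns) contains at most 2 pebbles in total. Then a column g of the ladder is 2-reachable from p (i.e., there is an executable rubbling sequence after which the two vertices of g together carry at least 2 pebbles) if and only if the two vertices of g together carry exactly 2 pebbles in p. -/
open SimpleGraph

def InvAt (a b c d e : ℕ) : Prop :=
  a ≤ 2 ∧ a + b + c ≤ 3 ∧ 2*a + 3*b + 2*c ≤ 6 ∧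
  a + b + c + d ≤ 4 ∧ 2*a + 3*b + 3*c + 2*d ≤ 8 ∧ a + b + c + d + e ≤ 4

def LadInv (g : ℤ) (C : ℤ → ℕ) : Prop :=
  C g ≤ 1 ∧ ∀ i : ℤ, InvAt (C i) (C (i+1)) (C (i+2)) (C (i+3)) (C (i+4))

lemma ladInv_at' {C : ℤ → ℕ}
    (hw : ∀ i : ℤ, InvAt (C i) (C (i+1)) (C (i+2)) (C (i+3)) (C (i+4))) (a b c d e : ℤ)
    (h1 : b = a+1) (h2 : c = a+2) (h3 : d = a+3) (h4 : e = a+4) :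
    InvAt (C a) (C b) (C c) (C d) (C e) := by
  subst h1; subst h2; subst h3; subst h4; exact hw a

lemma lmono {g : ℤ} {C C' : ℤ → ℕ} (h : LadInv g C) (hle : ∀ i, C' i ≤ C i) : LadInv g C' := by
  refine ⟨le_trans (hle g) h.1, fun i => ?_⟩
  have h0 := h.2 i
  have e0 := hle i; have e1 := hle (i+1); have e2 := hle (i+2)
  have e3 := hle (i+3); have e4 := hle (i+4)
  simp only [InvAt] at *
  omega
lemma lm3 {g : ℤ} {C C' : ℤ → ℕ} (h : LadInv g C) (s : ℤ)
    (hs1 : 1 ≤ C s) (hs2 : 1 ≤ C (s+2))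
    (hC' : ∀ j, C' j = if j = s then C j - 1 else if j = s + 2 then C j - 1
      else if j = s + 1 then C j + 1 else C j) :
    LadInv g C' := by
  obtain ⟨hg, hw⟩ := h
  constructor
  · have Hs := ladInv_at' hw s (s+1) (s+2) (s+3) (s+4) (by ring) (by ring) (by ring) (by ring)
    have hgv := hC' g
    split_ifs at hgv with h1 h2 h3
    · omega
    · omega
    · subst h3; simp only [InvAt] at Hs; omega
    · omega
  intro i
  rcases (by omega : s ≤ i-3 ∨ i = s+2 ∨ i = s+1 ∨ i = s ∨ s = i+1 ∨ s = i+2 ∨ s = i+3 ∨ s = i+4 ∨ i+5 ≤ s) with hk|hk|hk|hk|hk|hk|hk|hk|hk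
  · -- far: s ≤ i-3
    have e0 : C' (i) = C (i) := by rw [hC']; split_ifs <;> omega
    have e1 : C' (i+1) = C (i+1) := by rw [hC']; split_ifs <;> omega
    have e2 : C' (i+2) = C (i+2) := by rw [hC']; split_ifs <;> omega
    have e3 : C' (i+3) = C (i+3) := by rw [hC']; split_ifs <;> omega
    have e4 : C' (i+4) = C (i+4) := by rw [hC']; split_ifs <;> omega
    rw [e0, e1, e2, e3, e4]; exact hw i
  · -- i = s+2
    subst hk
    rw [show s+2+1 = s+3 by ring, show s+2+2 = s+4 by ring, show s+2+3 = s+5 by ring, show s+2+4 = s+6 by ring]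
    have e0 : C' (s+2) = C (s+2) - 1 := by rw [hC']; split_ifs <;> omega
    have e1 : C' (s+3) = C (s+3) := by rw [hC']; split_ifs <;> omega
    have e2 : C' (s+4) = C (s+4) := by rw [hC']; split_ifs <;> omega
    have e3 : C' (s+5) = C (s+5) := by rw [hC']; split_ifs <;> omega
    have e4 : C' (s+6) = C (s+6) := by rw [hC']; split_ifs <;> omega
    have H0 := ladInv_at' hw (s-2) (s-1) (s) (s+1) (s+2) (by ring) (by ring) (by ring) (by ring)
    have H1 := ladInv_at' hw (s-1) (s) (s+1) (s+2) (s+3) (by ring) (by ring) (by ring) (by ring)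
    have H2 := ladInv_at' hw (s) (s+1) (s+2) (s+3) (s+4) (by ring) (by ring) (by ring) (by ring)
    have H3 := ladInv_at' hw (s+1) (s+2) (s+3) (s+4) (s+5) (by ring) (by ring) (by ring) (by ring)
    have H4 := ladInv_at' hw (s+2) (s+3) (s+4) (s+5) (s+6) (by ring) (by ring) (by ring) (by ring)
    have H5 := ladInv_at' hw (s+3) (s+4) (s+5) (s+6) (s+7) (by ring) (by ring) (by ring) (by ring)
    have H6 := ladInv_at' hw (s+4) (s+5) (s+6) (s+7) (s+8) (by ring) (by ring) (by ring) (by ring)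
    have H7 := ladInv_at' hw (s+5) (s+6) (s+7) (s+8) (s+9) (by ring) (by ring) (by ring) (by ring)
    rw [e0, e1, e2, e3, e4]
    simp only [InvAt] at H0 H1 H2 H3 H4 H5 H6 H7 ⊢
    omega
  · -- i = s+1
    subst hk
    rw [show s+1+1 = s+2 by ring, show s+1+2 = s+3 by ring, show s+1+3 = s+4 by ring, show s+1+4 = s+5 by ring]
    have e0 : C' (s+1) = C (s+1) + 1 := by rw [hC']; split_ifs <;> omega
    have e1 : C' (s+2) = C (s+2) - 1 := by rw [hC']; split_ifs <;> omega
    have e2 : C' (s+3) = C (s+3) := by rw [hC']; split_ifs <;> omega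
    have e3 : C' (s+4) = C (s+4) := by rw [hC']; split_ifs <;> omega
    have e4 : C' (s+5) = C (s+5) := by rw [hC']; split_ifs <;> omega
    have H0 := ladInv_at' hw (s-2) (s-1) (s) (s+1) (s+2) (by ring) (by ring) (by ring) (by ring)
    have H1 := ladInv_at' hw (s-1) (s) (s+1) (s+2) (s+3) (by ring) (by ring) (by ring) (by ring)
    have H2 := ladInv_at' hw (s) (s+1) (s+2) (s+3) (s+4) (by ring) (by ring) (by ring) (by ring)
    have H3 := ladInv_at' hw (s+1) (s+2) (s+3) (s+4) (s+5) (by ring) (by ring) (by ring) (by ring)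
    have H4 := ladInv_at' hw (s+2) (s+3) (s+4) (s+5) (s+6) (by ring) (by ring) (by ring) (by ring)
    have H5 := ladInv_at' hw (s+3) (s+4) (s+5) (s+6) (s+7) (by ring) (by ring) (by ring) (by ring)
    have H6 := ladInv_at' hw (s+4) (s+5) (s+6) (s+7) (s+8) (by ring) (by ring) (by ring) (by ring)
    have H7 := ladInv_at' hw (s+5) (s+6) (s+7) (s+8) (s+9) (by ring) (by ring) (by ring) (by ring)
    rw [e0, e1, e2, e3, e4]
    simp only [InvAt] at H0 H1 H2 H3 H4 H5 H6 H7 ⊢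
    omega
  · -- s = i
    subst hk
    have e0 : C' (i) = C (i) - 1 := by rw [hC']; split_ifs <;> omega
    have e1 : C' (i+1) = C (i+1) + 1 := by rw [hC']; split_ifs <;> omega
    have e2 : C' (i+2) = C (i+2) - 1 := by rw [hC']; split_ifs <;> omega
    have e3 : C' (i+3) = C (i+3) := by rw [hC']; split_ifs <;> omega
    have e4 : C' (i+4) = C (i+4) := by rw [hC']; split_ifs <;> omega
    have H0 := ladInv_at' hw (i-2) (i-1) (i) (i+1) (i+2) (by ring) (by ring) (by ring) (by ring)
    have H1 := ladInv_at' hw (i-1) (i) (i+1) (i+2) (i+3) (by ring) (by ring) (by ring) (by ring)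
    have H2 := ladInv_at' hw (i) (i+1) (i+2) (i+3) (i+4) (by ring) (by ring) (by ring) (by ring)
    have H3 := ladInv_at' hw (i+1) (i+2) (i+3) (i+4) (i+5) (by ring) (by ring) (by ring) (by ring)
    have H4 := ladInv_at' hw (i+2) (i+3) (i+4) (i+5) (i+6) (by ring) (by ring) (by ring) (by ring)
    have H5 := ladInv_at' hw (i+3) (i+4) (i+5) (i+6) (i+7) (by ring) (by ring) (by ring) (by ring)
    have H6 := ladInv_at' hw (i+4) (i+5) (i+6) (i+7) (i+8) (by ring) (by ring) (by ring) (by ring)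
    have H7 := ladInv_at' hw (i+5) (i+6) (i+7) (i+8) (i+9) (by ring) (by ring) (by ring) (by ring)
    rw [e0, e1, e2, e3, e4]
    simp only [InvAt] at H0 H1 H2 H3 H4 H5 H6 H7 ⊢
    omega
  · -- s = i+1
    subst hk
    rw [show i+1+2 = i+3 by ring] at hs2
    have e0 : C' (i) = C (i) := by rw [hC']; split_ifs <;> omega
    have e1 : C' (i+1) = C (i+1) - 1 := by rw [hC']; split_ifs <;> omega
    have e2 : C' (i+2) = C (i+2) + 1 := by rw [hC']; split_ifs <;> omega
    have e3 : C' (i+3) = C (i+3) - 1 := by rw [hC']; split_ifs <;> omega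
    have e4 : C' (i+4) = C (i+4) := by rw [hC']; split_ifs <;> omega
    have H0 := ladInv_at' hw (i-2) (i-1) (i) (i+1) (i+2) (by ring) (by ring) (by ring) (by ring)
    have H1 := ladInv_at' hw (i-1) (i) (i+1) (i+2) (i+3) (by ring) (by ring) (by ring) (by ring)
    have H2 := ladInv_at' hw (i) (i+1) (i+2) (i+3) (i+4) (by ring) (by ring) (by ring) (by ring)
    have H3 := ladInv_at' hw (i+1) (i+2) (i+3) (i+4) (i+5) (by ring) (by ring) (by ring) (by ring)
    have H4 := ladInv_at' hw (i+2) (i+3) (i+4) (i+5) (i+6) (by ring) (by ring) (by ring) (by ring)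
    have H5 := ladInv_at' hw (i+3) (i+4) (i+5) (i+6) (i+7) (by ring) (by ring) (by ring) (by ring)
    have H6 := ladInv_at' hw (i+4) (i+5) (i+6) (i+7) (i+8) (by ring) (by ring) (by ring) (by ring)
    have H7 := ladInv_at' hw (i+5) (i+6) (i+7) (i+8) (i+9) (by ring) (by ring) (by ring) (by ring)
    rw [e0, e1, e2, e3, e4]
    simp only [InvAt] at H0 H1 H2 H3 H4 H5 H6 H7 ⊢
    omega
  · -- s = i+2
    subst hk
    rw [show i+2+2 = i+4 by ring] at hs2
    have e0 : C' (i) = C (i) := by rw [hC']; split_ifs <;> omega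
    have e1 : C' (i+1) = C (i+1) := by rw [hC']; split_ifs <;> omega
    have e2 : C' (i+2) = C (i+2) - 1 := by rw [hC']; split_ifs <;> omega
    have e3 : C' (i+3) = C (i+3) + 1 := by rw [hC']; split_ifs <;> omega
    have e4 : C' (i+4) = C (i+4) - 1 := by rw [hC']; split_ifs <;> omega
    have H0 := ladInv_at' hw (i-2) (i-1) (i) (i+1) (i+2) (by ring) (by ring) (by ring) (by ring)
    have H1 := ladInv_at' hw (i-1) (i) (i+1) (i+2) (i+3) (by ring) (by ring) (by ring) (by ring)
    have H2 := ladInv_at' hw (i) (i+1) (i+2) (i+3) (i+4) (by ring) (by ring) (by ring) (by ring)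
    have H3 := ladInv_at' hw (i+1) (i+2) (i+3) (i+4) (i+5) (by ring) (by ring) (by ring) (by ring)
    have H4 := ladInv_at' hw (i+2) (i+3) (i+4) (i+5) (i+6) (by ring) (by ring) (by ring) (by ring)
    have H5 := ladInv_at' hw (i+3) (i+4) (i+5) (i+6) (i+7) (by ring) (by ring) (by ring) (by ring)
    have H6 := ladInv_at' hw (i+4) (i+5) (i+6) (i+7) (i+8) (by ring) (by ring) (by ring) (by ring)
    have H7 := ladInv_at' hw (i+5) (i+6) (i+7) (i+8) (i+9) (by ring) (by ring) (by ring) (by ring)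
    rw [e0, e1, e2, e3, e4]
    simp only [InvAt] at H0 H1 H2 H3 H4 H5 H6 H7 ⊢
    omega
  · -- s = i+3
    subst hk
    rw [show i+3+2 = i+5 by ring] at hs2
    have e0 : C' (i) = C (i) := by rw [hC']; split_ifs <;> omega
    have e1 : C' (i+1) = C (i+1) := by rw [hC']; split_ifs <;> omega
    have e2 : C' (i+2) = C (i+2) := by rw [hC']; split_ifs <;> omega
    have e3 : C' (i+3) = C (i+3) - 1 := by rw [hC']; split_ifs <;> omega
    have e4 : C' (i+4) = C (i+4) + 1 := by rw [hC']; split_ifs <;> omega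
    have H0 := ladInv_at' hw (i-2) (i-1) (i) (i+1) (i+2) (by ring) (by ring) (by ring) (by ring)
    have H1 := ladInv_at' hw (i-1) (i) (i+1) (i+2) (i+3) (by ring) (by ring) (by ring) (by ring)
    have H2 := ladInv_at' hw (i) (i+1) (i+2) (i+3) (i+4) (by ring) (by ring) (by ring) (by ring)
    have H3 := ladInv_at' hw (i+1) (i+2) (i+3) (i+4) (i+5) (by ring) (by ring) (by ring) (by ring)
    have H4 := ladInv_at' hw (i+2) (i+3) (i+4) (i+5) (i+6) (by ring) (by ring) (by ring) (by ring)
    have H5 := ladInv_at' hw (i+3) (i+4) (i+5) (i+6) (i+7) (by ring) (by ring) (by ring) (by ring)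
    have H6 := ladInv_at' hw (i+4) (i+5) (i+6) (i+7) (i+8) (by ring) (by ring) (by ring) (by ring)
    have H7 := ladInv_at' hw (i+5) (i+6) (i+7) (i+8) (i+9) (by ring) (by ring) (by ring) (by ring)
    rw [e0, e1, e2, e3, e4]
    simp only [InvAt] at H0 H1 H2 H3 H4 H5 H6 H7 ⊢
    omega
  · -- s = i+4
    subst hk
    rw [show i+4+2 = i+6 by ring] at hs2
    have e0 : C' (i) = C (i) := by rw [hC']; split_ifs <;> omega
    have e1 : C' (i+1) = C (i+1) := by rw [hC']; split_ifs <;> omega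
    have e2 : C' (i+2) = C (i+2) := by rw [hC']; split_ifs <;> omega
    have e3 : C' (i+3) = C (i+3) := by rw [hC']; split_ifs <;> omega
    have e4 : C' (i+4) = C (i+4) - 1 := by rw [hC']; split_ifs <;> omega
    have H0 := ladInv_at' hw (i-2) (i-1) (i) (i+1) (i+2) (by ring) (by ring) (by ring) (by ring)
    have H1 := ladInv_at' hw (i-1) (i) (i+1) (i+2) (i+3) (by ring) (by ring) (by ring) (by ring)
    have H2 := ladInv_at' hw (i) (i+1) (i+2) (i+3) (i+4) (by ring) (by ring) (by ring) (by ring)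
    have H3 := ladInv_at' hw (i+1) (i+2) (i+3) (i+4) (i+5) (by ring) (by ring) (by ring) (by ring)
    have H4 := ladInv_at' hw (i+2) (i+3) (i+4) (i+5) (i+6) (by ring) (by ring) (by ring) (by ring)
    have H5 := ladInv_at' hw (i+3) (i+4) (i+5) (i+6) (i+7) (by ring) (by ring) (by ring) (by ring)
    have H6 := ladInv_at' hw (i+4) (i+5) (i+6) (i+7) (i+8) (by ring) (by ring) (by ring) (by ring)
    have H7 := ladInv_at' hw (i+5) (i+6) (i+7) (i+8) (i+9) (by ring) (by ring) (by ring) (by ring)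
    rw [e0, e1, e2, e3, e4]
    simp only [InvAt] at H0 H1 H2 H3 H4 H5 H6 H7 ⊢
    omega
  · -- far: i+5 ≤ s
    have e0 : C' (i) = C (i) := by rw [hC']; split_ifs <;> omega
    have e1 : C' (i+1) = C (i+1) := by rw [hC']; split_ifs <;> omega
    have e2 : C' (i+2) = C (i+2) := by rw [hC']; split_ifs <;> omega
    have e3 : C' (i+3) = C (i+3) := by rw [hC']; split_ifs <;> omega
    have e4 : C' (i+4) = C (i+4) := by rw [hC']; split_ifs <;> omega
    rw [e0, e1, e2, e3, e4]; exact hw i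

lemma lm2r {g : ℤ} {C C' : ℤ → ℕ} (h : LadInv g C) (s : ℤ)
    (hs1 : 2 ≤ C s)
    (hC' : ∀ j, C' j = if j = s then C j - 2 else if j = s + 1 then C j + 1 else C j) :
    LadInv g C' := by
  obtain ⟨hg, hw⟩ := h
  constructor
  · have Hs := ladInv_at' hw s (s+1) (s+2) (s+3) (s+4) (by ring) (by ring) (by ring) (by ring)
    have hgv := hC' g
    split_ifs at hgv with h1 h2
    · omega
    · subst h2; simp only [InvAt] at Hs; omega
    · omega
  intro i
  rcases (by omega : s ≤ i-2 ∨ i = s+1 ∨ i = s ∨ s = i+1 ∨ s = i+2 ∨ s = i+3 ∨ s = i+4 ∨ i+5 ≤ s) with hk|hk|hk|hk|hk|hk|hk|hk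
  · -- far: s ≤ i-2
    have e0 : C' (i) = C (i) := by rw [hC']; split_ifs <;> omega
    have e1 : C' (i+1) = C (i+1) := by rw [hC']; split_ifs <;> omega
    have e2 : C' (i+2) = C (i+2) := by rw [hC']; split_ifs <;> omega
    have e3 : C' (i+3) = C (i+3) := by rw [hC']; split_ifs <;> omega
    have e4 : C' (i+4) = C (i+4) := by rw [hC']; split_ifs <;> omega
    rw [e0, e1, e2, e3, e4]; exact hw i
  · -- i = s+1
    subst hk
    rw [show s+1+1 = s+2 by ring, show s+1+2 = s+3 by ring, show s+1+3 = s+4 by ring, show s+1+4 = s+5 by ring]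
    have e0 : C' (s+1) = C (s+1) + 1 := by rw [hC']; split_ifs <;> omega
    have e1 : C' (s+2) = C (s+2) := by rw [hC']; split_ifs <;> omega
    have e2 : C' (s+3) = C (s+3) := by rw [hC']; split_ifs <;> omega
    have e3 : C' (s+4) = C (s+4) := by rw [hC']; split_ifs <;> omega
    have e4 : C' (s+5) = C (s+5) := by rw [hC']; split_ifs <;> omega
    have H0 := ladInv_at' hw (s-2) (s-1) (s) (s+1) (s+2) (by ring) (by ring) (by ring) (by ring)
    have H1 := ladInv_at' hw (s-1) (s) (s+1) (s+2) (s+3) (by ring) (by ring) (by ring) (by ring)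
    have H2 := ladInv_at' hw (s) (s+1) (s+2) (s+3) (s+4) (by ring) (by ring) (by ring) (by ring)
    have H3 := ladInv_at' hw (s+1) (s+2) (s+3) (s+4) (s+5) (by ring) (by ring) (by ring) (by ring)
    have H4 := ladInv_at' hw (s+2) (s+3) (s+4) (s+5) (s+6) (by ring) (by ring) (by ring) (by ring)
    have H5 := ladInv_at' hw (s+3) (s+4) (s+5) (s+6) (s+7) (by ring) (by ring) (by ring) (by ring)
    have H6 := ladInv_at' hw (s+4) (s+5) (s+6) (s+7) (s+8) (by ring) (by ring) (by ring) (by ring)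
    have H7 := ladInv_at' hw (s+5) (s+6) (s+7) (s+8) (s+9) (by ring) (by ring) (by ring) (by ring)
    rw [e0, e1, e2, e3, e4]
    simp only [InvAt] at H0 H1 H2 H3 H4 H5 H6 H7 ⊢
    omega
  · -- s = i
    subst hk
    have e0 : C' (i) = C (i) - 2 := by rw [hC']; split_ifs <;> omega
    have e1 : C' (i+1) = C (i+1) + 1 := by rw [hC']; split_ifs <;> omega
    have e2 : C' (i+2) = C (i+2) := by rw [hC']; split_ifs <;> omega
    have e3 : C' (i+3) = C (i+3) := by rw [hC']; split_ifs <;> omega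
    have e4 : C' (i+4) = C (i+4) := by rw [hC']; split_ifs <;> omega
    have H0 := ladInv_at' hw (i-2) (i-1) (i) (i+1) (i+2) (by ring) (by ring) (by ring) (by ring)
    have H1 := ladInv_at' hw (i-1) (i) (i+1) (i+2) (i+3) (by ring) (by ring) (by ring) (by ring)
    have H2 := ladInv_at' hw (i) (i+1) (i+2) (i+3) (i+4) (by ring) (by ring) (by ring) (by ring)
    have H3 := ladInv_at' hw (i+1) (i+2) (i+3) (i+4) (i+5) (by ring) (by ring) (by ring) (by ring)
    have H4 := ladInv_at' hw (i+2) (i+3) (i+4) (i+5) (i+6) (by ring) (by ring) (by ring) (by ring)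
    have H5 := ladInv_at' hw (i+3) (i+4) (i+5) (i+6) (i+7) (by ring) (by ring) (by ring) (by ring)
    have H6 := ladInv_at' hw (i+4) (i+5) (i+6) (i+7) (i+8) (by ring) (by ring) (by ring) (by ring)
    have H7 := ladInv_at' hw (i+5) (i+6) (i+7) (i+8) (i+9) (by ring) (by ring) (by ring) (by ring)
    rw [e0, e1, e2, e3, e4]
    simp only [InvAt] at H0 H1 H2 H3 H4 H5 H6 H7 ⊢
    omega
  · -- s = i+1
    subst hk
    have e0 : C' (i) = C (i) := by rw [hC']; split_ifs <;> omega
    have e1 : C' (i+1) = C (i+1) - 2 := by rw [hC']; split_ifs <;> omega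
    have e2 : C' (i+2) = C (i+2) + 1 := by rw [hC']; split_ifs <;> omega
    have e3 : C' (i+3) = C (i+3) := by rw [hC']; split_ifs <;> omega
    have e4 : C' (i+4) = C (i+4) := by rw [hC']; split_ifs <;> omega
    have H0 := ladInv_at' hw (i-2) (i-1) (i) (i+1) (i+2) (by ring) (by ring) (by ring) (by ring)
    have H1 := ladInv_at' hw (i-1) (i) (i+1) (i+2) (i+3) (by ring) (by ring) (by ring) (by ring)
    have H2 := ladInv_at' hw (i) (i+1) (i+2) (i+3) (i+4) (by ring) (by ring) (by ring) (by ring)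
    have H3 := ladInv_at' hw (i+1) (i+2) (i+3) (i+4) (i+5) (by ring) (by ring) (by ring) (by ring)
    have H4 := ladInv_at' hw (i+2) (i+3) (i+4) (i+5) (i+6) (by ring) (by ring) (by ring) (by ring)
    have H5 := ladInv_at' hw (i+3) (i+4) (i+5) (i+6) (i+7) (by ring) (by ring) (by ring) (by ring)
    have H6 := ladInv_at' hw (i+4) (i+5) (i+6) (i+7) (i+8) (by ring) (by ring) (by ring) (by ring)
    have H7 := ladInv_at' hw (i+5) (i+6) (i+7) (i+8) (i+9) (by ring) (by ring) (by ring) (by ring)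
    rw [e0, e1, e2, e3, e4]
    simp only [InvAt] at H0 H1 H2 H3 H4 H5 H6 H7 ⊢
    omega
  · -- s = i+2
    subst hk
    have e0 : C' (i) = C (i) := by rw [hC']; split_ifs <;> omega
    have e1 : C' (i+1) = C (i+1) := by rw [hC']; split_ifs <;> omega
    have e2 : C' (i+2) = C (i+2) - 2 := by rw [hC']; split_ifs <;> omega
    have e3 : C' (i+3) = C (i+3) + 1 := by rw [hC']; split_ifs <;> omega
    have e4 : C' (i+4) = C (i+4) := by rw [hC']; split_ifs <;> omega
    have H0 := ladInv_at' hw (i-2) (i-1) (i) (i+1) (i+2) (by ring) (by ring) (by ring) (by ring)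
    have H1 := ladInv_at' hw (i-1) (i) (i+1) (i+2) (i+3) (by ring) (by ring) (by ring) (by ring)
    have H2 := ladInv_at' hw (i) (i+1) (i+2) (i+3) (i+4) (by ring) (by ring) (by ring) (by ring)
    have H3 := ladInv_at' hw (i+1) (i+2) (i+3) (i+4) (i+5) (by ring) (by ring) (by ring) (by ring)
    have H4 := ladInv_at' hw (i+2) (i+3) (i+4) (i+5) (i+6) (by ring) (by ring) (by ring) (by ring)
    have H5 := ladInv_at' hw (i+3) (i+4) (i+5) (i+6) (i+7) (by ring) (by ring) (by ring) (by ring)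
    have H6 := ladInv_at' hw (i+4) (i+5) (i+6) (i+7) (i+8) (by ring) (by ring) (by ring) (by ring)
    have H7 := ladInv_at' hw (i+5) (i+6) (i+7) (i+8) (i+9) (by ring) (by ring) (by ring) (by ring)
    rw [e0, e1, e2, e3, e4]
    simp only [InvAt] at H0 H1 H2 H3 H4 H5 H6 H7 ⊢
    omega
  · -- s = i+3
    subst hk
    have e0 : C' (i) = C (i) := by rw [hC']; split_ifs <;> omega
    have e1 : C' (i+1) = C (i+1) := by rw [hC']; split_ifs <;> omega
    have e2 : C' (i+2) = C (i+2) := by rw [hC']; split_ifs <;> omega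
    have e3 : C' (i+3) = C (i+3) - 2 := by rw [hC']; split_ifs <;> omega
    have e4 : C' (i+4) = C (i+4) + 1 := by rw [hC']; split_ifs <;> omega
    have H0 := ladInv_at' hw (i-2) (i-1) (i) (i+1) (i+2) (by ring) (by ring) (by ring) (by ring)
    have H1 := ladInv_at' hw (i-1) (i) (i+1) (i+2) (i+3) (by ring) (by ring) (by ring) (by ring)
    have H2 := ladInv_at' hw (i) (i+1) (i+2) (i+3) (i+4) (by ring) (by ring) (by ring) (by ring)
    have H3 := ladInv_at' hw (i+1) (i+2) (i+3) (i+4) (i+5) (by ring) (by ring) (by ring) (by ring)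
    have H4 := ladInv_at' hw (i+2) (i+3) (i+4) (i+5) (i+6) (by ring) (by ring) (by ring) (by ring)
    have H5 := ladInv_at' hw (i+3) (i+4) (i+5) (i+6) (i+7) (by ring) (by ring) (by ring) (by ring)
    have H6 := ladInv_at' hw (i+4) (i+5) (i+6) (i+7) (i+8) (by ring) (by ring) (by ring) (by ring)
    have H7 := ladInv_at' hw (i+5) (i+6) (i+7) (i+8) (i+9) (by ring) (by ring) (by ring) (by ring)
    rw [e0, e1, e2, e3, e4]
    simp only [InvAt] at H0 H1 H2 H3 H4 H5 H6 H7 ⊢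
    omega
  · -- s = i+4
    subst hk
    have e0 : C' (i) = C (i) := by rw [hC']; split_ifs <;> omega
    have e1 : C' (i+1) = C (i+1) := by rw [hC']; split_ifs <;> omega
    have e2 : C' (i+2) = C (i+2) := by rw [hC']; split_ifs <;> omega
    have e3 : C' (i+3) = C (i+3) := by rw [hC']; split_ifs <;> omega
    have e4 : C' (i+4) = C (i+4) - 2 := by rw [hC']; split_ifs <;> omega
    have H0 := ladInv_at' hw (i-2) (i-1) (i) (i+1) (i+2) (by ring) (by ring) (by ring) (by ring)
    have H1 := ladInv_at' hw (i-1) (i) (i+1) (i+2) (i+3) (by ring) (by ring) (by ring) (by ring)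
    have H2 := ladInv_at' hw (i) (i+1) (i+2) (i+3) (i+4) (by ring) (by ring) (by ring) (by ring)
    have H3 := ladInv_at' hw (i+1) (i+2) (i+3) (i+4) (i+5) (by ring) (by ring) (by ring) (by ring)
    have H4 := ladInv_at' hw (i+2) (i+3) (i+4) (i+5) (i+6) (by ring) (by ring) (by ring) (by ring)
    have H5 := ladInv_at' hw (i+3) (i+4) (i+5) (i+6) (i+7) (by ring) (by ring) (by ring) (by ring)
    have H6 := ladInv_at' hw (i+4) (i+5) (i+6) (i+7) (i+8) (by ring) (by ring) (by ring) (by ring)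
    have H7 := ladInv_at' hw (i+5) (i+6) (i+7) (i+8) (i+9) (by ring) (by ring) (by ring) (by ring)
    rw [e0, e1, e2, e3, e4]
    simp only [InvAt] at H0 H1 H2 H3 H4 H5 H6 H7 ⊢
    omega
  · -- far: i+5 ≤ s
    have e0 : C' (i) = C (i) := by rw [hC']; split_ifs <;> omega
    have e1 : C' (i+1) = C (i+1) := by rw [hC']; split_ifs <;> omega
    have e2 : C' (i+2) = C (i+2) := by rw [hC']; split_ifs <;> omega
    have e3 : C' (i+3) = C (i+3) := by rw [hC']; split_ifs <;> omega
    have e4 : C' (i+4) = C (i+4) := by rw [hC']; split_ifs <;> omega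
    rw [e0, e1, e2, e3, e4]; exact hw i

lemma lm2l {g : ℤ} {C C' : ℤ → ℕ} (h : LadInv g C) (s : ℤ)
    (hs1 : 2 ≤ C s)
    (hC' : ∀ j, C' j = if j = s then C j - 2 else if j = s - 1 then C j + 1 else C j) :
    LadInv g C' := by
  obtain ⟨hg, hw⟩ := h
  constructor
  · have Hs := ladInv_at' hw (s-2) (s-1) (s) (s+1) (s+2) (by ring) (by ring) (by ring) (by ring)
    have hgv := hC' g
    split_ifs at hgv with h1 h2
    · omega
    · subst h2; simp only [InvAt] at Hs; omega
    · omega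
  intro i
  rcases (by omega : s ≤ i-1 ∨ i = s ∨ s = i+1 ∨ s = i+2 ∨ s = i+3 ∨ s = i+4 ∨ s = i+5 ∨ i+6 ≤ s) with hk|hk|hk|hk|hk|hk|hk|hk
  · -- far: s ≤ i-1
    have e0 : C' (i) = C (i) := by rw [hC']; split_ifs <;> omega
    have e1 : C' (i+1) = C (i+1) := by rw [hC']; split_ifs <;> omega
    have e2 : C' (i+2) = C (i+2) := by rw [hC']; split_ifs <;> omega
    have e3 : C' (i+3) = C (i+3) := by rw [hC']; split_ifs <;> omega
    have e4 : C' (i+4) = C (i+4) := by rw [hC']; split_ifs <;> omega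
    rw [e0, e1, e2, e3, e4]; exact hw i
  · -- s = i
    subst hk
    have e0 : C' (i) = C (i) - 2 := by rw [hC']; split_ifs <;> omega
    have e1 : C' (i+1) = C (i+1) := by rw [hC']; split_ifs <;> omega
    have e2 : C' (i+2) = C (i+2) := by rw [hC']; split_ifs <;> omega
    have e3 : C' (i+3) = C (i+3) := by rw [hC']; split_ifs <;> omega
    have e4 : C' (i+4) = C (i+4) := by rw [hC']; split_ifs <;> omega
    have H0 := ladInv_at' hw (i-2) (i-1) (i) (i+1) (i+2) (by ring) (by ring) (by ring) (by ring)
    have H1 := ladInv_at' hw (i-1) (i) (i+1) (i+2) (i+3) (by ring) (by ring) (by ring) (by ring)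
    have H2 := ladInv_at' hw (i) (i+1) (i+2) (i+3) (i+4) (by ring) (by ring) (by ring) (by ring)
    have H3 := ladInv_at' hw (i+1) (i+2) (i+3) (i+4) (i+5) (by ring) (by ring) (by ring) (by ring)
    have H4 := ladInv_at' hw (i+2) (i+3) (i+4) (i+5) (i+6) (by ring) (by ring) (by ring) (by ring)
    have H5 := ladInv_at' hw (i+3) (i+4) (i+5) (i+6) (i+7) (by ring) (by ring) (by ring) (by ring)
    have H6 := ladInv_at' hw (i+4) (i+5) (i+6) (i+7) (i+8) (by ring) (by ring) (by ring) (by ring)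
    have H7 := ladInv_at' hw (i+5) (i+6) (i+7) (i+8) (i+9) (by ring) (by ring) (by ring) (by ring)
    rw [e0, e1, e2, e3, e4]
    simp only [InvAt] at H0 H1 H2 H3 H4 H5 H6 H7 ⊢
    omega
  · -- s = i+1
    subst hk
    have e0 : C' (i) = C (i) + 1 := by rw [hC']; split_ifs <;> omega
    have e1 : C' (i+1) = C (i+1) - 2 := by rw [hC']; split_ifs <;> omega
    have e2 : C' (i+2) = C (i+2) := by rw [hC']; split_ifs <;> omega
    have e3 : C' (i+3) = C (i+3) := by rw [hC']; split_ifs <;> omega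
    have e4 : C' (i+4) = C (i+4) := by rw [hC']; split_ifs <;> omega
    have H0 := ladInv_at' hw (i-2) (i-1) (i) (i+1) (i+2) (by ring) (by ring) (by ring) (by ring)
    have H1 := ladInv_at' hw (i-1) (i) (i+1) (i+2) (i+3) (by ring) (by ring) (by ring) (by ring)
    have H2 := ladInv_at' hw (i) (i+1) (i+2) (i+3) (i+4) (by ring) (by ring) (by ring) (by ring)
    have H3 := ladInv_at' hw (i+1) (i+2) (i+3) (i+4) (i+5) (by ring) (by ring) (by ring) (by ring)
    have H4 := ladInv_at' hw (i+2) (i+3) (i+4) (i+5) (i+6) (by ring) (by ring) (by ring) (by ring)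
    have H5 := ladInv_at' hw (i+3) (i+4) (i+5) (i+6) (i+7) (by ring) (by ring) (by ring) (by ring)
    have H6 := ladInv_at' hw (i+4) (i+5) (i+6) (i+7) (i+8) (by ring) (by ring) (by ring) (by ring)
    have H7 := ladInv_at' hw (i+5) (i+6) (i+7) (i+8) (i+9) (by ring) (by ring) (by ring) (by ring)
    rw [e0, e1, e2, e3, e4]
    simp only [InvAt] at H0 H1 H2 H3 H4 H5 H6 H7 ⊢
    omega
  · -- s = i+2
    subst hk
    have e0 : C' (i) = C (i) := by rw [hC']; split_ifs <;> omega
    have e1 : C' (i+1) = C (i+1) + 1 := by rw [hC']; split_ifs <;> omega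
    have e2 : C' (i+2) = C (i+2) - 2 := by rw [hC']; split_ifs <;> omega
    have e3 : C' (i+3) = C (i+3) := by rw [hC']; split_ifs <;> omega
    have e4 : C' (i+4) = C (i+4) := by rw [hC']; split_ifs <;> omega
    have H0 := ladInv_at' hw (i-2) (i-1) (i) (i+1) (i+2) (by ring) (by ring) (by ring) (by ring)
    have H1 := ladInv_at' hw (i-1) (i) (i+1) (i+2) (i+3) (by ring) (by ring) (by ring) (by ring)
    have H2 := ladInv_at' hw (i) (i+1) (i+2) (i+3) (i+4) (by ring) (by ring) (by ring) (by ring)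
    have H3 := ladInv_at' hw (i+1) (i+2) (i+3) (i+4) (i+5) (by ring) (by ring) (by ring) (by ring)
    have H4 := ladInv_at' hw (i+2) (i+3) (i+4) (i+5) (i+6) (by ring) (by ring) (by ring) (by ring)
    have H5 := ladInv_at' hw (i+3) (i+4) (i+5) (i+6) (i+7) (by ring) (by ring) (by ring) (by ring)
    have H6 := ladInv_at' hw (i+4) (i+5) (i+6) (i+7) (i+8) (by ring) (by ring) (by ring) (by ring)
    have H7 := ladInv_at' hw (i+5) (i+6) (i+7) (i+8) (i+9) (by ring) (by ring) (by ring) (by ring)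
    rw [e0, e1, e2, e3, e4]
    simp only [InvAt] at H0 H1 H2 H3 H4 H5 H6 H7 ⊢
    omega
  · -- s = i+3
    subst hk
    have e0 : C' (i) = C (i) := by rw [hC']; split_ifs <;> omega
    have e1 : C' (i+1) = C (i+1) := by rw [hC']; split_ifs <;> omega
    have e2 : C' (i+2) = C (i+2) + 1 := by rw [hC']; split_ifs <;> omega
    have e3 : C' (i+3) = C (i+3) - 2 := by rw [hC']; split_ifs <;> omega
    have e4 : C' (i+4) = C (i+4) := by rw [hC']; split_ifs <;> omega
    have H0 := ladInv_at' hw (i-2) (i-1) (i) (i+1) (i+2) (by ring) (by ring) (by ring) (by ring)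
    have H1 := ladInv_at' hw (i-1) (i) (i+1) (i+2) (i+3) (by ring) (by ring) (by ring) (by ring)
    have H2 := ladInv_at' hw (i) (i+1) (i+2) (i+3) (i+4) (by ring) (by ring) (by ring) (by ring)
    have H3 := ladInv_at' hw (i+1) (i+2) (i+3) (i+4) (i+5) (by ring) (by ring) (by ring) (by ring)
    have H4 := ladInv_at' hw (i+2) (i+3) (i+4) (i+5) (i+6) (by ring) (by ring) (by ring) (by ring)
    have H5 := ladInv_at' hw (i+3) (i+4) (i+5) (i+6) (i+7) (by ring) (by ring) (by ring) (by ring)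
    have H6 := ladInv_at' hw (i+4) (i+5) (i+6) (i+7) (i+8) (by ring) (by ring) (by ring) (by ring)
    have H7 := ladInv_at' hw (i+5) (i+6) (i+7) (i+8) (i+9) (by ring) (by ring) (by ring) (by ring)
    rw [e0, e1, e2, e3, e4]
    simp only [InvAt] at H0 H1 H2 H3 H4 H5 H6 H7 ⊢
    omega
  · -- s = i+4
    subst hk
    have e0 : C' (i) = C (i) := by rw [hC']; split_ifs <;> omega
    have e1 : C' (i+1) = C (i+1) := by rw [hC']; split_ifs <;> omega
    have e2 : C' (i+2) = C (i+2) := by rw [hC']; split_ifs <;> omega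
    have e3 : C' (i+3) = C (i+3) + 1 := by rw [hC']; split_ifs <;> omega
    have e4 : C' (i+4) = C (i+4) - 2 := by rw [hC']; split_ifs <;> omega
    have H0 := ladInv_at' hw (i-2) (i-1) (i) (i+1) (i+2) (by ring) (by ring) (by ring) (by ring)
    have H1 := ladInv_at' hw (i-1) (i) (i+1) (i+2) (i+3) (by ring) (by ring) (by ring) (by ring)
    have H2 := ladInv_at' hw (i) (i+1) (i+2) (i+3) (i+4) (by ring) (by ring) (by ring) (by ring)
    have H3 := ladInv_at' hw (i+1) (i+2) (i+3) (i+4) (i+5) (by ring) (by ring) (by ring) (by ring)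
    have H4 := ladInv_at' hw (i+2) (i+3) (i+4) (i+5) (i+6) (by ring) (by ring) (by ring) (by ring)
    have H5 := ladInv_at' hw (i+3) (i+4) (i+5) (i+6) (i+7) (by ring) (by ring) (by ring) (by ring)
    have H6 := ladInv_at' hw (i+4) (i+5) (i+6) (i+7) (i+8) (by ring) (by ring) (by ring) (by ring)
    have H7 := ladInv_at' hw (i+5) (i+6) (i+7) (i+8) (i+9) (by ring) (by ring) (by ring) (by ring)
    rw [e0, e1, e2, e3, e4]
    simp only [InvAt] at H0 H1 H2 H3 H4 H5 H6 H7 ⊢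
    omega
  · -- s = i+5
    subst hk
    have e0 : C' (i) = C (i) := by rw [hC']; split_ifs <;> omega
    have e1 : C' (i+1) = C (i+1) := by rw [hC']; split_ifs <;> omega
    have e2 : C' (i+2) = C (i+2) := by rw [hC']; split_ifs <;> omega
    have e3 : C' (i+3) = C (i+3) := by rw [hC']; split_ifs <;> omega
    have e4 : C' (i+4) = C (i+4) + 1 := by rw [hC']; split_ifs <;> omega
    have H0 := ladInv_at' hw (i-2) (i-1) (i) (i+1) (i+2) (by ring) (by ring) (by ring) (by ring)
    have H1 := ladInv_at' hw (i-1) (i) (i+1) (i+2) (i+3) (by ring) (by ring) (by ring) (by ring)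
    have H2 := ladInv_at' hw (i) (i+1) (i+2) (i+3) (i+4) (by ring) (by ring) (by ring) (by ring)
    have H3 := ladInv_at' hw (i+1) (i+2) (i+3) (i+4) (i+5) (by ring) (by ring) (by ring) (by ring)
    have H4 := ladInv_at' hw (i+2) (i+3) (i+4) (i+5) (i+6) (by ring) (by ring) (by ring) (by ring)
    have H5 := ladInv_at' hw (i+3) (i+4) (i+5) (i+6) (i+7) (by ring) (by ring) (by ring) (by ring)
    have H6 := ladInv_at' hw (i+4) (i+5) (i+6) (i+7) (i+8) (by ring) (by ring) (by ring) (by ring)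
    have H7 := ladInv_at' hw (i+5) (i+6) (i+7) (i+8) (i+9) (by ring) (by ring) (by ring) (by ring)
    rw [e0, e1, e2, e3, e4]
    simp only [InvAt] at H0 H1 H2 H3 H4 H5 H6 H7 ⊢
    omega
  · -- far: i+6 ≤ s
    have e0 : C' (i) = C (i) := by rw [hC']; split_ifs <;> omega
    have e1 : C' (i+1) = C (i+1) := by rw [hC']; split_ifs <;> omega
    have e2 : C' (i+2) = C (i+2) := by rw [hC']; split_ifs <;> omega
    have e3 : C' (i+3) = C (i+3) := by rw [hC']; split_ifs <;> omega
    have e4 : C' (i+4) = C (i+4) := by rw [hC']; split_ifs <;> omega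
    rw [e0, e1, e2, e3, e4]; exact hw i

variable {n : ℕ}

def colC (n : ℕ) (p : Fin n × Fin 2 → ℕ) : ℤ → ℕ :=
  fun i => if h : 0 ≤ i ∧ i < (n : ℤ) then
    p (⟨i.toNat, by omega⟩, 0) + p (⟨i.toNat, by omega⟩, 1) else 0

lemma fin2_eq (j : Fin 2) : j = 0 ∨ j = 1 := by omega

lemma colC_eval (p : Fin n × Fin 2 → ℕ) (b : Fin n) :
    colC n p ((b : ℕ) : ℤ) = p (b, 0) + p (b, 1) := by
  have h : (0:ℤ) ≤ ((b:ℕ):ℤ) ∧ ((b:ℕ):ℤ) < (n:ℤ) := ⟨Int.natCast_nonneg _, by exact_mod_cast b.isLt⟩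
  rw [colC, dif_pos h]
  congr <;> simp [Fin.ext_iff]

lemma colC_out (p : Fin n × Fin 2 → ℕ) (i : ℤ) (h : ¬(0 ≤ i ∧ i < (n:ℤ))) : colC n p i = 0 := by
  rw [colC, dif_neg h]

lemma colC_cases (i : ℤ) : (∃ b : Fin n, i = ((b:ℕ):ℤ)) ∨ ¬(0 ≤ i ∧ i < (n:ℤ)) := by
  by_cases h : 0 ≤ i ∧ i < (n:ℤ)
  · exact Or.inl ⟨⟨i.toNat, by omega⟩, by simp; omega⟩
  · exact Or.inr h

lemma colC_sum (p : Fin n × Fin 2 → ℕ) (i : ℤ) :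
    colC n p i = ∑ v : Fin n × Fin 2, if ((v.1 : ℕ) : ℤ) = i then p v else 0 := by
  rcases colC_cases (n := n) i with ⟨b, rfl⟩ | h
  · rw [colC_eval, Fintype.sum_prod_type]
    have hrw : ∀ a : Fin n, (∑ c : Fin 2, if ((a : ℕ) : ℤ) = ((b : ℕ) : ℤ) then p (a, c) else 0)
        = if a = b then p (a,0) + p (a,1) else 0 := by
      intro a
      rw [Fin.sum_univ_two]
      by_cases hab : a = b
      · subst hab; simp
      · rw [if_neg hab, if_neg (by simpa [Fin.ext_iff] using hab), if_neg (by simpa [Fin.ext_iff] using hab)]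
    rw [Finset.sum_congr rfl (fun a _ => hrw a), Finset.sum_ite_eq' Finset.univ b]
    simp
  · rw [colC_out p _ h]
    symm
    apply Finset.sum_eq_zero
    intro v _
    have := v.1.isLt
    rw [if_neg (by omega)]

lemma window_le (hn : 3 ≤ n) (p : Fin n × Fin 2 → ℕ)
    (hsmall : ∀ i : ℕ, i + 3 ≤ n →
      (∑ v : Fin n × Fin 2, if i ≤ (v.1 : ℕ) ∧ (v.1 : ℕ) < i + 3 then p v else 0) ≤ 2) :
    ∀ i : ℤ, colC n p i + colC n p (i+1) + colC n p (i+2) ≤ 2 := by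
  intro i
  have h := hsmall (min (max i 0).toNat (n-3)) (by omega)
  rw [colC_sum, colC_sum, colC_sum, ← Finset.sum_add_distrib, ← Finset.sum_add_distrib]
  refine le_trans (Finset.sum_le_sum ?_) h
  intro v _
  have hv := v.1.isLt
  split_ifs <;> omega


lemma ladder_adj_s9 {n : ℕ} {x y : Fin n × Fin 2} (h : (ladder n).Adj x y) :
    (x.1 = y.1 ∧ x.2 ≠ y.2) ∨
      (x.2 = y.2 ∧ (((x.1 : ℕ)) + 1 = (y.1 : ℕ) ∨ ((y.1 : ℕ)) + 1 = (x.1 : ℕ))) := by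
  rw [ladder, SimpleGraph.boxProd_adj] at h
  rcases h with ⟨h1, h2⟩ | ⟨h1, h2⟩
  · exact Or.inr ⟨h2, by rwa [SimpleGraph.pathGraph_adj] at h1⟩
  · exact Or.inl ⟨h2, h1.ne⟩

lemma cast_col_eq {n : ℕ} (a c : Fin n) : (((a:ℕ):ℤ) = ((c:ℕ):ℤ)) ↔ a = c := by
  simp [Fin.ext_iff]

lemma colC_mono_of {n : ℕ} {p q : Fin n × Fin 2 → ℕ} (u v : Fin n × Fin 2)
    (hcol : v.1 = u.1) (hne : v ≠ u)
    (hle : ∀ z, z ≠ u → q z ≤ p z)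
    (hu : q u ≤ p u + 1) (hv : q v + 1 ≤ p v) :
    ∀ i, colC n q i ≤ colC n p i := by
  intro i
  rcases colC_cases (n := n) i with ⟨b, rfl⟩ | hout
  · rw [colC_eval, colC_eval]
    by_cases hb : b = u.1
    · have hsnd : v.2 ≠ u.2 := fun h => hne (Prod.ext (hcol) h)
      rcases fin2_eq v.2 with h0 | h0 <;> rcases fin2_eq u.2 with h1 | h1
      · exact absurd (h0.trans h1.symm) hsnd
      · have hv' : v = (b, 0) := Prod.ext (by rw [hcol, hb]) h0
        have hu' : u = (b, 1) := Prod.ext (by rw [hb]) h1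
        rw [← hv', ← hu']
        omega
      · have hv' : v = (b, 1) := Prod.ext (by rw [hcol, hb]) h0
        have hu' : u = (b, 0) := Prod.ext (by rw [hb]) h1
        rw [← hv', ← hu']
        omega
      · exact absurd (h0.trans h1.symm) hsnd
    · have h0 := hle (b,0) (fun hh => hb (congrArg Prod.fst hh))
      have h1 := hle (b,1) (fun hh => hb (congrArg Prod.fst hh))
      omega
  · rw [colC_out q _ hout, colC_out p _ hout]

lemma colC_col_add {n : ℕ} {p q : Fin n × Fin 2 → ℕ} (b : Fin n) (z : Fin n × Fin 2)
    (hz : z.1 = b) (k : ℕ)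
    (hmate : ∀ j : Fin 2, (b,j) ≠ z → q (b,j) = p (b,j)) (hzq : q z = p z + k) :
    colC n q ((b:ℕ):ℤ) = colC n p ((b:ℕ):ℤ) + k := by
  rw [colC_eval, colC_eval]
  rcases fin2_eq z.2 with h0 | h0
  · have hz' : z = (b, 0) := Prod.ext hz h0
    rw [← hz', hmate 1 (by rw [hz']; simp), hzq]
    omega
  · have hz' : z = (b, 1) := Prod.ext hz h0
    rw [← hz', hmate 0 (by rw [hz']; simp), hzq]
    omega

lemma colC_col_sub {n : ℕ} {p q : Fin n × Fin 2 → ℕ} (b : Fin n) (z : Fin n × Fin 2)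
    (hz : z.1 = b) (k : ℕ)
    (hmate : ∀ j : Fin 2, (b,j) ≠ z → q (b,j) = p (b,j)) (hzq : q z + k = p z) :
    colC n q ((b:ℕ):ℤ) + k = colC n p ((b:ℕ):ℤ) := by
  rw [colC_eval, colC_eval]
  rcases fin2_eq z.2 with h0 | h0
  · have hz' : z = (b, 0) := Prod.ext hz h0
    rw [← hz', hmate 1 (by rw [hz']; simp)]
    omega
  · have hz' : z = (b, 1) := Prod.ext hz h0
    rw [← hz', hmate 0 (by rw [hz']; simp)]
    omega

lemma colC_col_untouched {n : ℕ} {p q : Fin n × Fin 2 → ℕ} (b : Fin n)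
    (h0 : q (b,0) = p (b,0)) (h1 : q (b,1) = p (b,1)) :
    colC n q ((b:ℕ):ℤ) = colC n p ((b:ℕ):ℤ) := by
  rw [colC_eval, colC_eval, h0, h1]

lemma step_pres {n : ℕ} (g : ℤ) {p q : Fin n × Fin 2 → ℕ}
    (hst : RubblingStep (ladder n) p q) (h : LadInv g (colC n p)) : LadInv g (colC n q) := by
  rcases hst with ⟨v, u, hadj, hv, hq⟩ | ⟨v, w, u, hvw, hva, hwa, hv1, hw1, hq⟩
  · -- pebbling move
    have qv : ∀ z, q z = if z = v then p z - 2 else if z = u then p z + 1 else p z :=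
      fun z => by rw [hq]
    have hne : v ≠ u := hadj.ne
    rcases ladder_adj_s9 hadj with ⟨hcol, _⟩ | ⟨_, hrel⟩
    · -- rung pebbling: monotone
      refine lmono h (colC_mono_of u v hcol hne ?_ ?_ ?_)
      · intro z hz
        rw [qv]
        split_ifs <;> first
          | omega
          | exact absurd (by assumption) hz
      · rw [qv, if_neg (Ne.symm hne), if_pos rfl]
      · rw [qv, if_pos rfl]; omega
    · -- cross pebbling
      have hvu1 : (v.1 : ℕ) ≠ (u.1 : ℕ) := by omega
      have hvr := v.1.isLt
      have hur := u.1.isLt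
      have hs2 : 2 ≤ colC n p ((v.1 : ℕ) : ℤ) := by
        rw [colC_eval]
        have : p v = p (v.1, v.2) := rfl
        rcases fin2_eq v.2 with h0 | h0 <;> rw [h0] at this <;> omega
      have hC' : ∀ j : ℤ, colC n q j = if j = ((v.1 : ℕ) : ℤ) then colC n p j - 2
          else if j = ((u.1 : ℕ) : ℤ) then colC n p j + 1 else colC n p j := by
        intro j
        rcases colC_cases (n := n) j with ⟨b, rfl⟩ | hout
        · by_cases hb : b = v.1
          · rw [if_pos (by rw [hb])]
            have key := colC_col_sub (p := p) (q := q) b v hb.symm 2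
              (fun j hj => by
                rw [qv, if_neg hj,
                  if_neg (fun hh : (b, j) = u => hvu1 (by rw [← hh, hb]))])
              (by rw [qv, if_pos rfl]; omega)
            omega
          · by_cases hb2 : b = u.1
            · rw [if_neg (fun hh => hb (by rwa [cast_col_eq] at hh)),
                if_pos (by rw [hb2])]
              exact colC_col_add b u hb2.symm 1
                (fun j hj => by
                  rw [qv,
                    if_neg (fun hh : (b, j) = v => hvu1 (by rw [← hh, hb2])),
                    if_neg hj])
                (by rw [qv, if_neg (Ne.symm hne), if_pos rfl])
            · rw [if_neg (fun hh => hb (by rwa [cast_col_eq] at hh)),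
                if_neg (fun hh => hb2 (by rwa [cast_col_eq] at hh))]
              exact colC_col_untouched b
                (by rw [qv, if_neg (fun hh => hb (congrArg Prod.fst hh)),
                  if_neg (fun hh => hb2 (congrArg Prod.fst hh))])
                (by rw [qv, if_neg (fun hh => hb (congrArg Prod.fst hh)),
                  if_neg (fun hh => hb2 (congrArg Prod.fst hh))])
        · rw [colC_out q _ hout, colC_out p _ hout, if_neg (by omega), if_neg (by omega)]
      rcases hrel with hrel | hrel
      · have ht : ((u.1 : ℕ) : ℤ) = ((v.1 : ℕ) : ℤ) + 1 := by omega
        rw [ht] at hC'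
        exact lm2r h _ hs2 hC'
      · have ht : ((u.1 : ℕ) : ℤ) = ((v.1 : ℕ) : ℤ) - 1 := by omega
        rw [ht] at hC'
        exact lm2l h _ hs2 hC'
  · -- strict rubbling move
    have qv : ∀ z, q z = if z = v then p z - 1 else if z = w then p z - 1
        else if z = u then p z + 1 else p z := fun z => by rw [hq]
    have hvu : v ≠ u := hva.ne
    have hwu : w ≠ u := hwa.ne
    rcases ladder_adj_s9 hva with ⟨hc1, hs1⟩ | ⟨hr1, hrel1⟩ <;>
      rcases ladder_adj_s9 hwa with ⟨hc2, hs2⟩ | ⟨hr2, hrel2⟩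
    · -- both rung: impossible
      exfalso
      apply hvw
      refine Prod.ext (hc1.trans hc2.symm) ?_
      rcases fin2_eq v.2 with h0 | h0 <;> rcases fin2_eq w.2 with h1 | h1 <;>
        rcases fin2_eq u.2 with h2 | h2 <;> simp_all
    · -- v rung of u, w cross
      refine lmono h (colC_mono_of u v hc1 hvu ?_ ?_ ?_)
      · intro z hz
        rw [qv]
        split_ifs <;> first
          | omega
          | exact absurd (by assumption) hz
      · rw [qv, if_neg (Ne.symm hvu), if_neg (Ne.symm hwu), if_pos rfl]
      · rw [qv, if_pos rfl]; omega
    · -- w rung of u, v cross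
      refine lmono h (colC_mono_of u w hc2 hwu ?_ ?_ ?_)
      · intro z hz
        rw [qv]
        split_ifs <;> first
          | omega
          | exact absurd (by assumption) hz
      · rw [qv, if_neg (Ne.symm hvu), if_neg (Ne.symm hwu), if_pos rfl]
      · rw [qv, if_neg (fun hh : w = v => hvw hh.symm), if_pos rfl]; omega
    · -- both cross: strict rubbling through columns
      have hvw1 : (v.1 : ℕ) ≠ (w.1 : ℕ) := by
        intro hh
        exact hvw (Prod.ext (Fin.ext hh) (hr1.trans hr2.symm))
      have hvu1 : (v.1 : ℕ) ≠ (u.1 : ℕ) := by omega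
      have hwu1 : (w.1 : ℕ) ≠ (u.1 : ℕ) := by omega
      have hvr := v.1.isLt
      have hwr := w.1.isLt
      have hur := u.1.isLt
      have hp_v : 1 ≤ colC n p ((v.1 : ℕ) : ℤ) := by
        rw [colC_eval]
        have hpv : p v = p (v.1, v.2) := rfl
        rcases fin2_eq v.2 with h0 | h0 <;> rw [h0] at hpv <;> omega
      have hp_w : 1 ≤ colC n p ((w.1 : ℕ) : ℤ) := by
        rw [colC_eval]
        have hpw : p w = p (w.1, w.2) := rfl
        rcases fin2_eq w.2 with h0 | h0 <;> rw [h0] at hpw <;> omega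
      have hCv : colC n q ((v.1 : ℕ) : ℤ) + 1 = colC n p ((v.1 : ℕ) : ℤ) :=
        colC_col_sub _ v rfl 1
          (fun j hj => by
            rw [qv, if_neg hj,
              if_neg (fun hh : (v.1, j) = w => hvw1 (by rw [← hh])),
              if_neg (fun hh : (v.1, j) = u => hvu1 (by rw [← hh]))])
          (by rw [qv, if_pos rfl]; omega)
      have hCw : colC n q ((w.1 : ℕ) : ℤ) + 1 = colC n p ((w.1 : ℕ) : ℤ) :=
        colC_col_sub _ w rfl 1
          (fun j hj => by
            rw [qv,
              if_neg (fun hh : (w.1, j) = v => hvw1 (by rw [← hh])),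
              if_neg hj,
              if_neg (fun hh : (w.1, j) = u => hwu1 (by rw [← hh]))])
          (by rw [qv, if_neg (fun hh : w = v => hvw hh.symm), if_pos rfl]; omega)
      have hCu : colC n q ((u.1 : ℕ) : ℤ) = colC n p ((u.1 : ℕ) : ℤ) + 1 :=
        colC_col_add _ u rfl 1
          (fun j hj => by
            rw [qv,
              if_neg (fun hh : (u.1, j) = v => hvu1 (by rw [← hh])),
              if_neg (fun hh : (u.1, j) = w => hwu1 (by rw [← hh])),
              if_neg hj])
          (by rw [qv, if_neg (Ne.symm hvu), if_neg (Ne.symm hwu), if_pos rfl])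
      have hUn : ∀ b : Fin n, b ≠ v.1 → b ≠ w.1 → b ≠ u.1 →
          colC n q ((b:ℕ):ℤ) = colC n p ((b:ℕ):ℤ) := by
        intro b h1 h2 h3
        have e : ∀ j : Fin 2, q (b, j) = p (b, j) := by
          intro j
          rw [qv, if_neg (fun hh => h1 (congrArg Prod.fst hh)),
            if_neg (fun hh => h2 (congrArg Prod.fst hh)),
            if_neg (fun hh => h3 (congrArg Prod.fst hh))]
        exact colC_col_untouched b (e 0) (e 1)
      have main : ∀ (a c : Fin n), (a:ℕ)+1 = (u.1:ℕ) → ((u.1:ℕ))+1 = (c:ℕ) →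
          (colC n q ((a:ℕ):ℤ) + 1 = colC n p ((a:ℕ):ℤ)) →
          (colC n q ((c:ℕ):ℤ) + 1 = colC n p ((c:ℕ):ℤ)) →
          (∀ b : Fin n, b ≠ a → b ≠ c → b ≠ u.1 →
            colC n q ((b:ℕ):ℤ) = colC n p ((b:ℕ):ℤ)) →
          1 ≤ colC n p ((a:ℕ):ℤ) → 1 ≤ colC n p ((c:ℕ):ℤ) →
          LadInv g (colC n q) := by
        intro a c h1 h2 hCa hCc hUn' hpa hpc
        have har := a.isLt
        have hcr := c.isLt
        have hC' : ∀ j : ℤ, colC n q j = if j = ((a:ℕ):ℤ) then colC n p j - 1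
            else if j = ((a:ℕ):ℤ) + 2 then colC n p j - 1
            else if j = ((a:ℕ):ℤ) + 1 then colC n p j + 1 else colC n p j := by
          intro j
          rcases colC_cases (n := n) j with ⟨b, rfl⟩ | hout
          · by_cases hba : b = a
            · subst hba
              rw [if_pos rfl]
              omega
            · have hba' : (b:ℕ) ≠ (a:ℕ) := fun hh => hba (Fin.ext hh)
              by_cases hbc : b = c
              · subst hbc
                rw [if_neg (by omega), if_pos (by omega)]
                omega
              · have hbc' : (b:ℕ) ≠ (c:ℕ) := fun hh => hbc (Fin.ext hh)
                by_cases hbu : b = u.1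
                · subst hbu
                  rw [if_neg (by omega), if_neg (by omega), if_pos (by omega)]
                  omega
                · have hbu' : (b:ℕ) ≠ (u.1:ℕ) := fun hh => hbu (Fin.ext hh)
                  rw [if_neg (by omega), if_neg (by omega), if_neg (by omega)]
                  exact hUn' b hba hbc hbu
          · rw [colC_out q _ hout, colC_out p _ hout, if_neg (by omega),
              if_neg (by omega), if_neg (by omega)]
        have ha2 : ((a:ℕ):ℤ) + 2 = ((c:ℕ):ℤ) := by omega
        refine lm3 h _ hpa ?_ hC'
        rw [ha2]
        exact hpc
      rcases hrel1 with hx | hx <;> rcases hrel2 with hy | hy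
      · exact absurd (Fin.ext (by omega) : v.1 = w.1) (fun hh => hvw1 (congrArg Fin.val hh))
      · exact main v.1 w.1 hx hy hCv hCw hUn hp_v hp_w
      · exact main w.1 v.1 hy hx hCw hCv (fun b h1 h2 h3 => hUn b h2 h1 h3) hp_w hp_v
      · exact absurd (Fin.ext (by omega) : v.1 = w.1) (fun hh => hvw1 (congrArg Fin.val hh))

lemma reach_pres {n : ℕ} (g : ℤ) {p q : Fin n × Fin 2 → ℕ}
    (hreach : Relation.ReflTransGen (RubblingStep (ladder n)) p q)
    (h : LadInv g (colC n p)) : LadInv g (colC n q) := by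
  induction hreach with
  | refl => exact h
  | tail _ hbc ih => exact step_pres g hbc ih

lemma ladInv_init {g : ℤ} {C : ℤ → ℕ}
    (hW : ∀ i : ℤ, C i + C (i+1) + C (i+2) ≤ 2) (hg : C g ≤ 1) : LadInv g C := by
  refine ⟨hg, fun i => ?_⟩
  have h0 := hW i
  have h1 : C (i+1) + C (i+2) + C (i+3) ≤ 2 := by
    have := hW (i+1)
    rw [show i+1+1 = i+2 by ring, show i+1+2 = i+3 by ring] at this
    exact this
  have h2 : C (i+2) + C (i+3) + C (i+4) ≤ 2 := by
    have := hW (i+2)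
    rw [show i+2+1 = i+3 by ring, show i+2+2 = i+4 by ring] at this
    exact this
  simp only [InvAt]
  omega

/-- If every three consecutive columns of the ladder carry at most 2 pebbles, then a
column `g` is 2-reachable if and only if it carries exactly 2 pebbles. -/
theorem column_two_reachable_iff (n : ℕ) (hn : 3 ≤ n) (p : Fin n × Fin 2 → ℕ)
    (hsmall : ∀ i : ℕ, i + 3 ≤ n →
      (∑ v : Fin n × Fin 2, if i ≤ (v.1 : ℕ) ∧ (v.1 : ℕ) < i + 3 then p v else 0) ≤ 2)
    (g : Fin n) :
    (∃ q, RubblingReach (ladder n) p q ∧ 2 ≤ q (g, 0) + q (g, 1)) ↔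
      p (g, 0) + p (g, 1) = 2 := by
  constructor
  · rintro ⟨q, hreach, hq⟩
    by_contra hne
    have hW := window_le hn p hsmall
    have hg1 : colC n p ((g : ℕ) : ℤ) ≤ 1 := by
      have hw := hW ((g : ℕ) : ℤ)
      rw [colC_eval] at hw ⊢
      omega
    have hinv : LadInv ((g : ℕ) : ℤ) (colC n p) := ladInv_init hW hg1
    have hinv' : LadInv ((g : ℕ) : ℤ) (colC n q) := reach_pres _ hreach hinv
    have hle := hinv'.1
    rw [colC_eval] at hle
    omega
  · intro h2
    exact ⟨p, Relation.ReflTransGen.refl, by omega⟩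
end

section
/- For every n ≥ 3, the 2-optimal rubbling number of the cycle C_n equals n; that is, the minimum size of a 2-solvable pebble distribution on C_n is exactly n. -/
/-!
The constant distribution `1` is 2-solvable: every vertex gets a second pebble by a strict
rubbling move from its two neighbours.

Conversely, fix a target `u`. Put weight `2 ^ (n - k)` on the vertex `k` steps before `u - 1`,
plus `2 ^ n - 1` on `u` itself, and let `L` be the weighted pebble count divided by `2 ^ n - 1`,
rounded down; `R` is its mirror image. Every rubbling move turns two pebbles on neighbours of
some `t` into one pebble on `t`, and such a move never increases `L + R`, while `L + R ≥ 4` as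
soon as `u` carries two pebbles. Unfolding the weights, `L + R = 2 p u + a u + b u` with
`a (u + 1) = p u + ⌊a u / 2⌋` and the mirrored recursion for `b`. This forces
`⌈a (u + 1) / 2⌉ + ⌈b u / 2⌉ ≥ 2` for every `u`, whereas `∑ ⌈a / 2⌉ = ∑ ⌈b / 2⌉ = ∑ p`;
hence `n ≤ ∑ p`.
-/

open SimpleGraph

section Arithmetic

theorem div_add_div_le_div_add_div {a b c d M : ℕ} (k : ℕ) (hM : 0 < M) (hac : a + k * M ≤ c)
    (hbd : b ≤ d + k * M) : a / M + b / M ≤ c / M + d / M := by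
  have hc : a / M + k ≤ c / M := by
    rw [← Nat.add_mul_div_right _ _ hM]
    exact Nat.div_le_div_right hac
  have hd : b / M ≤ d / M + k := by
    rw [← Nat.add_mul_div_right _ _ hM]
    exact Nat.div_le_div_right hbd
  omega

theorem le_dotProduct_div {ι : Type*} [Fintype ι] (p w : ι → ℕ) {u : ι} {M : ℕ} (hM : 0 < M)
    (hw : M ≤ w u) : p u ≤ p ⬝ᵥ w / M := by
  rw [Nat.le_div_iff_mul_le hM]
  calc p u * M ≤ p u * w u := Nat.mul_le_mul_left _ hw
    _ ≤ p ⬝ᵥ w := Finset.single_le_sum (fun i _ => Nat.zero_le (p i * w i)) (Finset.mem_univ u)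

theorem sum_add_one_div_two_eq {ι : Type*} [Fintype ι] {a p : ι → ℕ} (σ : Equiv.Perm ι)
    (h : ∀ i, a (σ i) = p i + a i / 2) : ∑ i, (a i + 1) / 2 = ∑ i, p i := by
  have hrec : ∑ i, a i = ∑ i, p i + ∑ i, a i / 2 := by
    rw [← Equiv.sum_comp σ a, ← Finset.sum_add_distrib]
    exact Finset.sum_congr rfl fun i _ => h i
  have hsplit : ∑ i, a i = ∑ i, (a i + 1) / 2 + ∑ i, a i / 2 := by
    rw [← Finset.sum_add_distrib]
    exact Finset.sum_congr rfl fun i _ => by omega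
  omega

theorem card_le_sum_of_halving {ι : Type*} [Fintype ι] {p a b : ι → ℕ} (σ : Equiv.Perm ι)
    (ha : ∀ i, a (σ i) = p i + a i / 2) (hb : ∀ i, b i = p (σ i) + b (σ i) / 2)
    (h : ∀ i, 4 ≤ 2 * p i + a i + b i) : Fintype.card ι ≤ ∑ i, p i := by
  have hpair (i : ι) : 2 ≤ (a (σ i) + 1) / 2 + (b i + 1) / 2 := by
    have := ha i
    have := hb i
    have := h i
    have := h (σ i)
    omega
  have hA := sum_add_one_div_two_eq σ ha
  have hB := sum_add_one_div_two_eq σ.symm fun i => by simpa using hb (σ.symm i)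
  have hsum := Finset.sum_le_sum fun i (_ : i ∈ Finset.univ) => hpair i
  rw [Finset.sum_add_distrib, Equiv.sum_comp σ fun i => (a i + 1) / 2, hA, hB,
    Finset.sum_const, Finset.card_univ, smul_eq_mul] at hsum
  omega

end Arithmetic

section Rubbling

variable {V : Type*} [DecidableEq V] {G : SimpleGraph V}

theorem RubblingStep.exists_eq_add_single {p q : V → ℕ} (h : RubblingStep G p q) :
    ∃ (r : V → ℕ) (s₁ s₂ t : V), G.Adj s₁ t ∧ G.Adj s₂ t ∧
      p = r + Pi.single s₁ 1 + Pi.single s₂ 1 ∧ q = r + Pi.single t 1 := by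
  rcases h with ⟨v, t, hvt, hv, rfl⟩ | ⟨v, w, t, hvw, hvt, hwt, hv, hw, rfl⟩
  · refine ⟨fun x => if x = v then p x - 2 else p x, v, v, t, hvt, hvt, ?_, ?_⟩ <;>
      funext x <;> simp only [Pi.add_apply, Pi.single_apply] <;> split_ifs <;> subst_vars <;>
      first | omega | exact absurd rfl hvt.ne
  · refine ⟨fun x => if x = v then p x - 1 else if x = w then p x - 1 else p x,
      v, w, t, hvt, hwt, ?_, ?_⟩ <;>
      funext x <;> simp only [Pi.add_apply, Pi.single_apply] <;> split_ifs <;> subst_vars <;>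
      first | omega | exact absurd rfl hvw | exact absurd rfl hvt.ne | exact absurd rfl hwt.ne

theorem RubblingReach.le_of_forall_adj {f : (V → ℕ) → ℕ}
    (hf : ∀ (r : V → ℕ) (s₁ s₂ t : V), G.Adj s₁ t → G.Adj s₂ t →
      f (r + Pi.single t 1) ≤ f (r + Pi.single s₁ 1 + Pi.single s₂ 1))
    {p q : V → ℕ} (h : RubblingReach G p q) : f q ≤ f p := by
  induction h with
  | refl => rfl
  | tail _ hstep ih =>
    obtain ⟨r, s₁, s₂, t, h₁, h₂, rfl, rfl⟩ := hstep.exists_eq_add_single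
    exact (hf r s₁ s₂ t h₁ h₂).trans ih

theorem kReachable_add_one_of_adj {p : V → ℕ} {u v w : V} (hvw : v ≠ w) (hv : G.Adj v u)
    (hw : G.Adj w u) (hpv : 1 ≤ p v) (hpw : 1 ≤ p w) : KReachable G p u (p u + 1) := by
  refine ⟨_, .single (Or.inr ⟨v, w, u, hvw, hv, hw, hpv, hpw, rfl⟩), ?_⟩
  simp [hv.ne', hw.ne']

end Rubbling

section CycleGraph

variable {n : ℕ} [NeZero n]

theorem Fin.val_neg_one : (-1 : Fin n).val = n - 1 := by
  obtain ⟨m, rfl⟩ := Nat.exists_eq_succ_of_ne_zero (NeZero.ne n)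
  simp [Fin.coe_neg_one]

theorem Fin.eq_one_of_val_eq_one {x : Fin n} (h : x.val = 1) : x = 1 := by
  have := x.isLt
  ext
  rw [h, Fin.val_one', Nat.mod_eq_of_lt (by omega)]

theorem eq_add_one_or_eq_add_one_of_cycleGraph_adj {s t : Fin n}
    (h : (cycleGraph n).Adj s t) : s = t + 1 ∨ t = s + 1 := by
  rw [cycleGraph_adj'] at h
  exact h.imp (fun h => sub_eq_iff_eq_add'.mp (Fin.eq_one_of_val_eq_one h))
    (fun h => sub_eq_iff_eq_add'.mp (Fin.eq_one_of_val_eq_one h))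

theorem cycleGraph_adj_neg {s t : Fin n} (h : (cycleGraph n).Adj s t) :
    (cycleGraph n).Adj (-s) (-t) := by
  rw [cycleGraph_adj'] at h ⊢
  rwa [neg_sub_neg, neg_sub_neg, or_comm]

theorem cycleGraph_adj_add_one (hn : 2 ≤ n) (v : Fin n) : (cycleGraph n).Adj v (v + 1) := by
  rw [cycleGraph_adj', add_sub_cancel_left, Fin.val_one', Nat.mod_eq_of_lt (by omega)]
  exact Or.inr rfl

theorem sub_one_ne_add_one (hn : 3 ≤ n) (v : Fin n) : v - 1 ≠ v + 1 := by
  intro h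
  have h2 : (1 : Fin n) + 1 = 0 := calc
    (1 : Fin n) + 1 = (v + 1) - (v - 1) := by abel
    _ = 0 := by rw [h, sub_self]
  have h3 := congrArg Fin.val h2
  rw [Fin.val_add, Fin.val_one', Nat.mod_eq_of_lt (show 1 < n by omega), Fin.val_zero,
    Nat.mod_eq_of_lt (show 1 + 1 < n by omega)] at h3
  omega

end CycleGraph

section Weights

variable {n : ℕ} [NeZero n]

theorem two_pow_sub_one_pos : 0 < 2 ^ n - 1 :=
  Nat.sub_pos_of_lt (Nat.one_lt_two_pow (NeZero.ne n))

theorem two_pow_sub_val_sub_one {y : Fin n} (hy : y ≠ 0) :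
    2 ^ (n - (y - 1).val) = 2 * 2 ^ (n - y.val) := by
  have hy' : 1 ≤ y.val := Nat.one_le_iff_ne_zero.mpr (Fin.val_ne_zero_iff.mpr hy)
  rw [Fin.val_sub_one_of_ne_zero hy, ← pow_succ']
  congr 1
  omega

/-- The weight of `u - 1 - k` is `2 ^ (n - k)`: pushed forward around the cycle towards `u`,
a pebble is worth half as much for each step further back. -/
def arcWeight (u v : Fin n) : ℕ := 2 ^ (n - (u - 1 - v).val)

theorem arcWeight_pos (u v : Fin n) : 0 < arcWeight u v := pow_pos two_pos _

theorem arcWeight_le (u v : Fin n) : arcWeight u v ≤ 2 ^ n :=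
  Nat.pow_le_pow_right two_pos (Nat.sub_le _ _)

theorem arcWeight_sub_one (u : Fin n) : arcWeight u (u - 1) = 2 ^ n := by
  simp [arcWeight]

theorem arcWeight_self (u : Fin n) : arcWeight u u = 2 := by
  rw [arcWeight, sub_sub_cancel_left, Fin.val_neg_one, Nat.sub_sub_self (NeZero.pos n), pow_one]

theorem arcWeight_add_one {u v : Fin n} (h : v + 1 ≠ u) :
    arcWeight u (v + 1) = 2 * arcWeight u v := by
  have hne : u - 1 - v ≠ 0 := sub_ne_zero.mpr fun huv => h (by rw [← huv, sub_add_cancel])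
  rw [arcWeight, arcWeight, sub_add_eq_sub_sub, two_pow_sub_val_sub_one hne]

theorem two_mul_arcWeight_add_one_left {u v : Fin n} (h : v ≠ u) :
    2 * arcWeight (u + 1) v = arcWeight u v := by
  have hne : u - v ≠ 0 := sub_ne_zero.mpr h.symm
  rw [arcWeight, arcWeight, add_sub_cancel_right, ← two_pow_sub_val_sub_one hne, sub_right_comm]

theorem arcWeight_add_one_self (u : Fin n) : arcWeight (u + 1) u = 2 ^ n := by
  simp [arcWeight]

theorem two_smul_arcWeight_add_one (u : Fin n) :
    2 • arcWeight (u + 1) = arcWeight u + Pi.single u (2 * (2 ^ n - 1)) := by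
  funext v
  by_cases h : v = u
  · subst h
    have := Nat.one_le_two_pow (n := n)
    simp only [Pi.smul_apply, smul_eq_mul, Pi.add_apply, Pi.single_eq_same,
      arcWeight_add_one_self, arcWeight_self]
    omega
  · simp [h, two_mul_arcWeight_add_one_left h]

/-- Without the floor, this is the periodic solution of `a (u + 1) = p u + a u / 2` over `ℚ`. -/
def leftFlow (u : Fin n) (p : Fin n → ℕ) : ℕ := p ⬝ᵥ arcWeight u / (2 ^ n - 1)

theorem leftFlow_add_one (u : Fin n) (p : Fin n → ℕ) :
    leftFlow (u + 1) p = p u + leftFlow u p / 2 := by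
  have h := congrArg (p ⬝ᵥ ·) (two_smul_arcWeight_add_one u)
  simp only [dotProduct_smul, dotProduct_add, dotProduct_single, smul_eq_mul] at h
  rw [leftFlow, leftFlow, ← Nat.mul_div_mul_left _ _ two_pos, h, Nat.div_div_eq_div_mul,
    mul_comm (2 ^ n - 1), Nat.add_mul_div_right _ _ (by simpa using two_pow_sub_one_pos), add_comm]

def leftWeight (u : Fin n) : Fin n → ℕ := arcWeight u + Pi.single u (2 ^ n - 1)

def rightWeight (u : Fin n) : Fin n → ℕ := fun v => leftWeight (-u) (-v)

theorem leftWeight_self (u : Fin n) : leftWeight u u = 2 ^ n + 1 := by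
  have := Nat.one_le_two_pow (n := n)
  simp only [leftWeight, Pi.add_apply, Pi.single_eq_same, arcWeight_self]
  omega

theorem two_pow_le_leftWeight_sub_one (u : Fin n) : 2 ^ n ≤ leftWeight u (u - 1) :=
  (arcWeight_sub_one u).ge.trans (Nat.le_add_right _ _)

theorem leftWeight_pos (u v : Fin n) : 0 < leftWeight u v :=
  (arcWeight_pos u v).trans_le (Nat.le_add_right _ _)

theorem leftWeight_le_two_mul {u s t : Fin n} (hst : (cycleGraph n).Adj s t) (ht : t ≠ u) :
    leftWeight u t ≤ 2 * leftWeight u s := by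
  have hwt : leftWeight u t = arcWeight u t := by simp [leftWeight, ht]
  by_cases hs : s = u
  · subst hs
    have := arcWeight_le s t
    rw [hwt, leftWeight_self]
    omega
  · have hws : leftWeight u s = arcWeight u s := by simp [leftWeight, hs]
    rw [hwt, hws]
    rcases eq_add_one_or_eq_add_one_of_cycleGraph_adj hst with rfl | rfl
    · rw [arcWeight_add_one hs]
      omega
    · rw [arcWeight_add_one ht]

theorem rightWeight_self (u : Fin n) : rightWeight u u = 2 ^ n + 1 :=
  leftWeight_self (-u)

theorem two_pow_le_rightWeight_add_one (u : Fin n) : 2 ^ n ≤ rightWeight u (u + 1) := by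
  rw [rightWeight, neg_add']
  exact two_pow_le_leftWeight_sub_one (-u)

theorem rightWeight_pos (u v : Fin n) : 0 < rightWeight u v :=
  leftWeight_pos (-u) (-v)

theorem rightWeight_le_two_mul {u s t : Fin n} (hst : (cycleGraph n).Adj s t) (ht : t ≠ u) :
    rightWeight u t ≤ 2 * rightWeight u s :=
  leftWeight_le_two_mul (cycleGraph_adj_neg hst) (neg_injective.ne ht)

end Weights

section Potential

variable {n : ℕ} [NeZero n]

def cyclePotential (u : Fin n) (p : Fin n → ℕ) : ℕ :=
  p ⬝ᵥ leftWeight u / (2 ^ n - 1) + p ⬝ᵥ rightWeight u / (2 ^ n - 1)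

/- Away from `u` every weight at most doubles along an edge, so neither floor grows. A move
into `u` whose two pebbles both come from one neighbour costs that side at least `2 ^ n - 1`,
which pays for the other side gaining at most as much. -/
theorem cyclePotential_rubbling_le {u s₁ s₂ t : Fin n} (r : Fin n → ℕ)
    (h₁ : (cycleGraph n).Adj s₁ t) (h₂ : (cycleGraph n).Adj s₂ t) :
    cyclePotential u (r + Pi.single t 1) ≤
      cyclePotential u (r + Pi.single s₁ 1 + Pi.single s₂ 1) := by
  have hM := two_pow_sub_one_pos (n := n)
  simp only [cyclePotential, add_dotProduct, single_dotProduct, one_mul, add_assoc]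
  by_cases ht : t = u
  · subst ht
    have hnbr {s : Fin n} (h : (cycleGraph n).Adj s t) : s = t - 1 ∨ s = t + 1 :=
      (eq_add_one_or_eq_add_one_of_cycleGraph_adj h).symm.imp
        (fun h => eq_sub_of_add_eq h.symm) id
    have := leftWeight_self t
    have := rightWeight_self t
    have := two_pow_le_leftWeight_sub_one t
    have := two_pow_le_rightWeight_add_one t
    have := leftWeight_pos t (t + 1)
    have := rightWeight_pos t (t - 1)
    rcases hnbr h₁ with rfl | rfl <;> rcases hnbr h₂ with h | h <;> subst h
    · exact div_add_div_le_div_add_div 1 hM (by omega) (by omega)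
    · exact div_add_div_le_div_add_div 0 hM (by omega) (by omega)
    · exact div_add_div_le_div_add_div 0 hM (by omega) (by omega)
    · exact (add_comm _ _).trans_le
        ((div_add_div_le_div_add_div 1 hM (by omega) (by omega)).trans_eq (add_comm _ _))
  · have := leftWeight_le_two_mul h₁ ht
    have := leftWeight_le_two_mul h₂ ht
    have := rightWeight_le_two_mul h₁ ht
    have := rightWeight_le_two_mul h₂ ht
    exact div_add_div_le_div_add_div 0 hM (by omega) (by omega)

theorem four_le_cyclePotential {u : Fin n} {p : Fin n → ℕ}
    (h : KReachable (cycleGraph n) p u 2) : 4 ≤ cyclePotential u p := by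
  obtain ⟨q, hpq, hq⟩ := h
  have hM := two_pow_sub_one_pos (n := n)
  have hl := le_dotProduct_div q (leftWeight u) hM (by rw [leftWeight_self]; omega)
  have hr := le_dotProduct_div q (rightWeight u) hM (by rw [rightWeight_self]; omega)
  calc 4 ≤ cyclePotential u q := by rw [cyclePotential]; omega
    _ ≤ cyclePotential u p :=
      hpq.le_of_forall_adj fun r _ _ _ h₁ h₂ => cyclePotential_rubbling_le r h₁ h₂

theorem cyclePotential_eq (u : Fin n) (p : Fin n → ℕ) :
    cyclePotential u p = 2 * p u + leftFlow u p + leftFlow (-u) (fun v => p (-v)) := by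
  have hM := two_pow_sub_one_pos (n := n)
  have hl : p ⬝ᵥ leftWeight u = p ⬝ᵥ arcWeight u + p u * (2 ^ n - 1) := by
    rw [leftWeight, dotProduct_add, dotProduct_single]
  have hr : p ⬝ᵥ rightWeight u = (fun v => p (-v)) ⬝ᵥ arcWeight (-u) + p u * (2 ^ n - 1) := by
    have hrw : rightWeight u = leftWeight (-u) ∘ (Equiv.neg (Fin n)).symm := rfl
    rw [hrw, dotProduct_comp_equiv_symm, leftWeight, dotProduct_add, dotProduct_single]
    simp [Function.comp_def]
  rw [cyclePotential, leftFlow, leftFlow, hl, hr, Nat.add_mul_div_right _ _ hM,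
    Nat.add_mul_div_right _ _ hM]
  ring

theorem card_le_sum_of_forall_kReachable_two {p : Fin n → ℕ}
    (hp : ∀ u, KReachable (cycleGraph n) p u 2) : n ≤ ∑ v, p v := by
  have hb (u : Fin n) : leftFlow (-u) (fun v => p (-v)) =
      p (u + 1) + leftFlow (-(u + 1)) (fun v => p (-v)) / 2 := by
    have h := leftFlow_add_one (-(u + 1)) fun v => p (-v)
    rwa [show -(u + 1) + 1 = -u by abel, neg_neg] at h
  have h := card_le_sum_of_halving (Equiv.addRight 1) (fun u => leftFlow_add_one u p) hb
    fun u => (four_le_cyclePotential (hp u)).trans_eq (cyclePotential_eq u p)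
  rwa [Fintype.card_fin] at h

end Potential

theorem kReachable_cycleGraph_one {n : ℕ} (hn : 3 ≤ n) (u : Fin n) :
    KReachable (cycleGraph n) 1 u 2 := by
  have : NeZero n := ⟨by omega⟩
  refine kReachable_add_one_of_adj (sub_one_ne_add_one hn u) ?_
    (cycleGraph_adj_add_one (by omega) u).symm le_rfl le_rfl
  have h := cycleGraph_adj_add_one (by omega) (u - 1)
  rwa [sub_add_cancel] at h

/-- The 2-optimal rubbling number of the cycle `C_n` is `n`. -/
theorem twoOptRub_cycle (n : ℕ) (hn : 3 ≤ n) :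
    sInf {m | ∃ p : Fin n → ℕ,
      (∀ u, KReachable (cycleGraph n) p u 2) ∧ ∑ v, p v = m} = n := by
  have : NeZero n := ⟨by omega⟩
  have hmem : n ∈ {m | ∃ p : Fin n → ℕ,
      (∀ u, KReachable (cycleGraph n) p u 2) ∧ ∑ v, p v = m} :=
    ⟨1, kReachable_cycleGraph_one hn, by simp⟩
  refine le_antisymm (Nat.sInf_le hmem) (le_csInf ⟨n, hmem⟩ ?_)
  rintro m ⟨p, hp, rfl⟩
  exact card_le_sum_of_forall_kReachable_two hp
end

section
/- Let n ≥ 5 and let p be an optimal pebble distribution on the n-prism C_n□P_2 (a solvable distribution of minimum size). Then there exists a rung, i.e. a pair {(i,1),(i,2)} of vertices with the same cycle coordinate, that is not 2-reachable from p (there is no executable rubbling sequence after which the two vertices of the rung together carry at least 2 pebbles). -/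
open SimpleGraph

/-- The `n`-prism `C_n □ P_2`. -/
def prism (n : ℕ) : SimpleGraph (Fin n × Fin 2) :=
  cycleGraph n □ pathGraph 2

/-!
For a rung `i`, give a pebble on column `j` the weight `2 ^ (-d(i, j))`, where `d` is the
distance on `C_n`. Along every edge of the prism this weight changes by a factor of at most two,
so no rubbling move increases the total weight `P_i`; a rung that is 2-reachable from `p` therefore
has `P_i(p) ≥ 2`.

The distribution with one pebble on `(j, j mod 3)` for every `j` with `j mod 3 ≠ 2` is solvable,
so an optimal `p` has `3 |p| ≤ 2n + 2`. Suppose every `P_i(p) ≥ 2`. Summing over `i`,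
`∑ P_i ≤ (3 - 2 ε) |p|` with `ε = 2 ^ (-⌊n/2⌋)`. If no column holds two pebbles, an empty column `u`
(one exists as `|p| < n`) has `P_u ≤ ∑_{j ≠ u} 2 ^ (-d(u, j)) < 2`. Otherwise at least
`n - |p| + 1` columns are empty, and at an empty column `u` one has
`(5/2) P_u ≤ P_{u-1} + P_{u+1}`, so each of them contributes at least `1` to `2 ∑ (P_i - 2)`.
The resulting inequality `n + 12 ε |p| ≤ 11` is impossible for `n ≥ 5`.
-/

open Finset

section Rubbling

variable {V : Type*} [DecidableEq V] {G : SimpleGraph V}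

theorem RubblingStep.add_right {p q : V → ℕ} (h : RubblingStep G p q) (r : V → ℕ) :
    RubblingStep G (p + r) (q + r) := by
  rcases h with ⟨v, u, hvu, hv, rfl⟩ | ⟨v, w, u, hvw, hvu, hwu, hv, hw, rfl⟩
  · refine Or.inl ⟨v, u, hvu, le_add_right hv, funext fun x => ?_⟩
    simp only [Pi.add_apply]
    split_ifs <;> subst_vars <;> omega
  · refine Or.inr ⟨v, w, u, hvw, hvu, hwu, le_add_right hv, le_add_right hw, funext fun x => ?_⟩
    simp only [Pi.add_apply]
    split_ifs <;> subst_vars <;> omega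

theorem RubblingReach.add_right {p q : V → ℕ} (h : RubblingReach G p q) (r : V → ℕ) :
    RubblingReach G (p + r) (q + r) :=
  Relation.ReflTransGen.lift (· + r) (fun _ _ hs => RubblingStep.add_right hs r) _ _ h

theorem KReachable.of_le {p : V → ℕ} {u : V} {k : ℕ} (h : k ≤ p u) : KReachable G p u k :=
  ⟨p, .refl, h⟩

theorem KReachable.of_rubble {p : V → ℕ} {x y u : V} (hxy : x ≠ y) (hxu : G.Adj x u)
    (hyu : G.Adj y u) (hx : 1 ≤ p x) (hy : KReachable G (Function.update p x (p x - 1)) y 1) :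
    KReachable G p u 1 := by
  obtain ⟨q, hq, hqy⟩ := hy
  have hp : Function.update p x (p x - 1) + Pi.single x 1 = p := by
    funext z
    rcases eq_or_ne z x with rfl | hz
    · simp only [Pi.add_apply, Function.update_self, Pi.single_eq_same]
      omega
    · simp [hz]
  have hreach := hq.add_right (Pi.single x 1)
  rw [hp] at hreach
  refine ⟨_, .tail hreach (Or.inr ⟨x, y, u, hxy, hxu, hyu, ?_, ?_, rfl⟩), ?_⟩
  · simp
  · simp [hxy.symm, hqy]
  · simp [hxu.ne', hyu.ne']

end Rubbling

section Potential

variable {V : Type*} [Fintype V]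

def potential (w : V → ℚ) (p : V → ℕ) : ℚ := ∑ v, (p v : ℚ) * w v

theorem potential_add (w : V → ℚ) (p q : V → ℕ) :
    potential w (p + q) = potential w p + potential w q := by
  simp only [potential, Pi.add_apply, Nat.cast_add, add_mul, sum_add_distrib]

theorem potential_single [DecidableEq V] (w : V → ℚ) (v : V) (k : ℕ) :
    potential w (Pi.single v k) = k * w v := by
  simp [potential, Pi.single_apply]

variable [DecidableEq V] {G : SimpleGraph V} {w : V → ℚ}

theorem RubblingStep.potential_le (hw : ∀ v u, G.Adj v u → w u ≤ 2 * w v) {p q : V → ℕ}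
    (h : RubblingStep G p q) : potential w q ≤ potential w p := by
  rcases h with ⟨v, u, hvu, hv, hq⟩ | ⟨v, x, u, hvx, hvu, hxu, hv, hx, hq⟩
  · have hbal : q + Pi.single v 2 = p + Pi.single u 1 := by
      have := hvu.ne
      subst hq
      funext y
      simp only [Pi.add_apply, Pi.single_apply]
      grind
    have := congrArg (potential w) hbal
    simp only [potential_add, potential_single, Nat.cast_ofNat, Nat.cast_one] at this
    linarith [hw v u hvu]
  · have hbal : q + Pi.single v 1 + Pi.single x 1 = p + Pi.single u 1 := by
      have := hvu.ne
      have := hxu.ne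
      subst hq
      funext y
      simp only [Pi.add_apply, Pi.single_apply]
      grind
    have := congrArg (potential w) hbal
    simp only [potential_add, potential_single, Nat.cast_one] at this
    linarith [hw v u hvu, hw x u hxu]

theorem RubblingReach.potential_le (hw : ∀ v u, G.Adj v u → w u ≤ 2 * w v) {p q : V → ℕ}
    (h : RubblingReach G p q) : potential w q ≤ potential w p := by
  induction h with
  | refl => exact le_rfl
  | tail _ hstep ih => exact (hstep.potential_le hw).trans ih

end Potential

theorem sum_range_half_pow (N : ℕ) : ∑ k ∈ range N, (2⁻¹ : ℚ) ^ k = 2 - 2 * 2⁻¹ ^ N := by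
  induction N with
  | zero => norm_num
  | succ N ih => rw [sum_range_succ, ih, pow_succ]; ring

theorem half_pow_le_two_mul_half_pow {a b : ℕ} (h : a ≤ b + 1) :
    (2⁻¹ : ℚ) ^ b ≤ 2 * 2⁻¹ ^ a := by
  have := pow_le_pow_of_le_one (by norm_num : (0 : ℚ) ≤ 2⁻¹) (by norm_num) h
  rw [pow_succ] at this
  linarith

theorem card_ne_zero_add_card_two_le_le_sum {ι : Type*} [Fintype ι] (Q : ι → ℕ) :
    #{j | Q j ≠ 0} + #{j | 2 ≤ Q j} ≤ ∑ j, Q j := by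
  simp only [card_filter, ← sum_add_distrib]
  exact sum_le_sum fun j _ => by split_ifs <;> omega

theorem eleven_lt_add_mul_half_pow {n S : ℕ} (hn : 5 ≤ n) (hS : 2 * n ≤ 3 * S) :
    11 < (n : ℚ) + 12 * 2⁻¹ ^ (n / 2) * S := by
  have hS' : (2 * n : ℚ) ≤ 3 * S := by exact_mod_cast hS
  rcases Nat.lt_or_ge n 11 with hn11 | hn11
  · interval_cases n <;> norm_num at hS' ⊢ <;> linarith
  · have : (11 : ℚ) ≤ n := by exact_mod_cast hn11
    have : (0 : ℚ) < 2⁻¹ ^ (n / 2) * S := by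
      have : (0 : ℚ) < S := by linarith
      positivity
    linarith

section CycNorm

variable {n : ℕ}

def cycNorm (k : Fin n) : ℕ := min k.val (n - k.val)

variable [NeZero n]

theorem Fin.val_add_one_eq_ite (k : Fin n) :
    (k + 1).val = if k.val + 1 = n then 0 else k.val + 1 := by
  rcases Nat.lt_or_ge 1 n with hn | hn
  · rw [Fin.val_add, Fin.val_one', Nat.mod_eq_of_lt hn]
    split_ifs with h
    · rw [h, Nat.mod_self]
    · exact Nat.mod_eq_of_lt (by omega)
  · obtain rfl : n = 1 := by have := NeZero.ne n; omega
    simp [Fin.fin_one_eq_zero k]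

theorem Fin.val_sub_one_eq_ite (k : Fin n) :
    (k - 1).val = if k.val = 0 then n - 1 else k.val - 1 := by
  split_ifs with h
  · rw [Fin.val_sub, h, add_zero, Fin.val_one']
    rcases Nat.lt_or_ge 1 n with hn | hn
    · rw [Nat.mod_eq_of_lt hn, Nat.mod_eq_of_lt (by omega)]
    · obtain rfl : n = 1 := by have := NeZero.ne n; omega
      rfl
  · exact Fin.val_sub_one_of_ne_zero (Fin.ne_of_val_ne h)

theorem cycNorm_zero : cycNorm (0 : Fin n) = 0 := by simp [cycNorm]

theorem cycNorm_add_one_le (k : Fin n) : cycNorm (k + 1) ≤ cycNorm k + 1 := by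
  have := k.isLt
  rw [cycNorm, cycNorm, Fin.val_add_one_eq_ite]
  split_ifs <;> omega

theorem cycNorm_sub_one_le (k : Fin n) : cycNorm (k - 1) ≤ cycNorm k + 1 := by
  have := k.isLt
  rw [cycNorm, cycNorm, Fin.val_sub_one_eq_ite]
  split_ifs <;> omega

theorem cycNorm_sub_one_or_add_one {k : Fin n} (hk : k ≠ 0) :
    cycNorm (k - 1) + 1 = cycNorm k ∨ cycNorm (k + 1) + 1 = cycNorm k := by
  have := k.isLt
  have : k.val ≠ 0 := Fin.val_ne_of_ne hk
  rw [cycNorm, cycNorm, cycNorm, Fin.val_sub_one_eq_ite, Fin.val_add_one_eq_ite]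
  split_ifs <;> omega

theorem cycNorm_le_of_adj {a b : Fin n} (h : (cycleGraph n).Adj a b) :
    cycNorm a ≤ cycNorm b + 1 := by
  have hone : ∀ c d : Fin n, (c - d).val = 1 → c = d + 1 := fun c d hcd =>
    eq_add_of_sub_eq' <| Fin.ext <| by
      rw [hcd, Fin.val_one', Nat.mod_eq_of_lt (by have := (c - d).isLt; omega)]
  rcases cycleGraph_adj'.mp h with hab | hba
  · rw [hone a b hab]
    exact cycNorm_add_one_le b
  · rw [eq_sub_of_add_eq (hone b a hba).symm]
    exact cycNorm_sub_one_le b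

theorem cycleGraph_adj_sub_left {a b : Fin n} (h : (cycleGraph n).Adj a b) (c : Fin n) :
    (cycleGraph n).Adj (c - a) (c - b) := by
  rw [cycleGraph_adj', sub_sub_sub_cancel_left, sub_sub_sub_cancel_left]
  exact cycleGraph_adj'.mp h.symm

theorem sum_half_pow_cycNorm_le :
    ∑ k : Fin n, (2⁻¹ : ℚ) ^ cycNorm k ≤ 3 - 2 * 2⁻¹ ^ (n / 2) := by
  set m := n / 2
  obtain ⟨r, hr⟩ : ∃ r, n = (m + 1) + r := ⟨n - (m + 1), by have := NeZero.ne n; omega⟩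
  have hhead : ∑ k ∈ range (m + 1), (2⁻¹ : ℚ) ^ min k (n - k) = 2 - 2⁻¹ ^ m := by
    rw [sum_congr rfl fun k hk => by rw [min_eq_left (by have := mem_range.mp hk; omega)],
      sum_range_half_pow, pow_succ]
    ring
  have htail : ∑ k ∈ range r, (2⁻¹ : ℚ) ^ min (m + 1 + k) (n - (m + 1 + k)) = 1 - 2⁻¹ ^ r := by
    rw [← sum_range_reflect, sum_congr rfl fun j hj => by
      rw [show min (m + 1 + (r - 1 - j)) (n - (m + 1 + (r - 1 - j))) = j + 1 by
        have := mem_range.mp hj; omega, pow_succ'], ← mul_sum, sum_range_half_pow]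
    ring
  have hpow : (2⁻¹ : ℚ) ^ m ≤ 2⁻¹ ^ r :=
    pow_le_pow_of_le_one (by norm_num) (by norm_num) (by omega)
  calc ∑ k : Fin n, (2⁻¹ : ℚ) ^ cycNorm k
      = ∑ k ∈ range (m + 1 + r), (2⁻¹ : ℚ) ^ min k (n - k) := by
        rw [← hr]
        exact Fin.sum_univ_eq_sum_range (fun k => (2⁻¹ : ℚ) ^ min k (n - k)) n
    _ = (2 - 2⁻¹ ^ m) + (1 - 2⁻¹ ^ r) := by rw [sum_range_add, hhead, htail]
    _ ≤ 3 - 2 * 2⁻¹ ^ (n / 2) := by linarith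

end CycNorm

section CycPotential

variable {n : ℕ}

def cycWeight (i j : Fin n) : ℚ := 2⁻¹ ^ cycNorm (i - j)

def cycPotential (Q : Fin n → ℕ) (i : Fin n) : ℚ := ∑ j, (Q j : ℚ) * cycWeight i j

theorem cycWeight_nonneg (i j : Fin n) : 0 ≤ cycWeight i j := by unfold cycWeight; positivity

variable [NeZero n]

theorem cycWeight_self (i : Fin n) : cycWeight i i = 1 := by
  rw [cycWeight, sub_self, cycNorm_zero, pow_zero]

theorem cycWeight_le_two_mul_of_adj {a b : Fin n} (h : (cycleGraph n).Adj a b) (i : Fin n) :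
    cycWeight i b ≤ 2 * cycWeight i a :=
  half_pow_le_two_mul_half_pow (cycNorm_le_of_adj (cycleGraph_adj_sub_left h i))

theorem five_halves_mul_cycWeight_le {u j : Fin n} (h : j ≠ u) :
    5 / 2 * cycWeight u j ≤ cycWeight (u - 1) j + cycWeight (u + 1) j := by
  -- One of `u ± 1` is a step closer to `j`, the other at most a step farther: `2 + 1/2 = 5/2`.
  have hk : u - j ≠ 0 := sub_ne_zero.mpr h.symm
  rw [cycWeight, cycWeight, cycWeight, sub_right_comm, add_sub_right_comm]
  rcases cycNorm_sub_one_or_add_one hk with hdec | hdec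
  · have h := half_pow_le_two_mul_half_pow (cycNorm_add_one_le (u - j))
    rw [← hdec, pow_succ] at h ⊢
    linarith
  · have h := half_pow_le_two_mul_half_pow (cycNorm_sub_one_le (u - j))
    rw [← hdec, pow_succ] at h ⊢
    linarith

theorem sum_cycWeight_le (i : Fin n) : ∑ j, cycWeight i j ≤ 3 - 2 * 2⁻¹ ^ (n / 2) :=
  (Fintype.sum_equiv (Equiv.subLeft i) _ _ fun _ => rfl).trans_le sum_half_pow_cycNorm_le

theorem sum_cycWeight_fst_le (j : Fin n) : ∑ i, cycWeight i j ≤ 3 - 2 * 2⁻¹ ^ (n / 2) :=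
  (Fintype.sum_equiv (Equiv.subRight j) _ _ fun _ => rfl).trans_le sum_half_pow_cycNorm_le

variable (Q : Fin n → ℕ)

theorem sum_cycPotential_le :
    ∑ i, cycPotential Q i ≤ (3 - 2 * 2⁻¹ ^ (n / 2)) * ∑ j, (Q j : ℚ) := calc
  ∑ i, cycPotential Q i = ∑ j, (Q j : ℚ) * ∑ i, cycWeight i j := by
    simp only [cycPotential, mul_sum]
    exact sum_comm
  _ ≤ ∑ j, (Q j : ℚ) * (3 - 2 * 2⁻¹ ^ (n / 2)) := by
    gcongr with j
    exact sum_cycWeight_fst_le j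
  _ = _ := by rw [← sum_mul, mul_comm]

theorem cycPotential_lt_two {u : Fin n} (hu : Q u = 0) (hQ : ∀ j, Q j ≤ 1) :
    cycPotential Q u < 2 := calc
  cycPotential Q u ≤ ∑ j, (cycWeight u j - if j = u then 1 else 0) := by
    refine sum_le_sum fun j _ => ?_
    split_ifs with hj
    · simp [hj, hu, cycWeight_self]
    · have := cycWeight_nonneg u j
      have : (Q j : ℚ) ≤ 1 := by exact_mod_cast hQ j
      nlinarith
  _ = ∑ j, cycWeight u j - 1 := by rw [sum_sub_distrib, sum_ite_eq' univ u, if_pos (mem_univ u)]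
  _ < 2 := by linarith [sum_cycWeight_le u, pow_pos (by norm_num : (0 : ℚ) < 2⁻¹) (n / 2)]

theorem five_halves_mul_cycPotential_le {u : Fin n} (hu : Q u = 0) :
    5 / 2 * cycPotential Q u ≤ cycPotential Q (u - 1) + cycPotential Q (u + 1) := by
  simp only [cycPotential, mul_sum, ← sum_add_distrib]
  refine sum_le_sum fun j _ => ?_
  rcases eq_or_ne j u with rfl | hj
  · simp [hu]
  · have := five_halves_mul_cycWeight_le hj
    have : (0 : ℚ) ≤ Q j := Nat.cast_nonneg _
    nlinarith

theorem card_eq_zero_le_of_two_le_cycPotential (hP : ∀ i, 2 ≤ cycPotential Q i) :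
    (#{u | Q u = 0} : ℚ) ≤ 2 * (∑ i, cycPotential Q i - 2 * n) := by
  set s : Fin n → ℚ := fun i => cycPotential Q i - 2
  have hs : ∀ i, 0 ≤ s i := fun i => sub_nonneg.mpr (hP i)
  have hsub : ∑ u, s (u - 1) = ∑ i, s i := Fintype.sum_equiv (Equiv.subRight 1) _ _ fun _ => rfl
  have hadd : ∑ u, s (u + 1) = ∑ i, s i := Fintype.sum_equiv (Equiv.addRight 1) _ _ fun _ => rfl
  calc (#{u | Q u = 0} : ℚ) = ∑ u with Q u = 0, 1 := by simp
    _ ≤ ∑ u with Q u = 0, (s (u - 1) + s (u + 1)) := by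
      refine sum_le_sum fun u hu => ?_
      have := five_halves_mul_cycPotential_le Q (mem_filter.mp hu).2
      have := hP u
      simp only [s]
      linarith
    _ ≤ ∑ u, (s (u - 1) + s (u + 1)) :=
      sum_le_sum_of_subset_of_nonneg (subset_univ _) fun u _ _ => add_nonneg (hs _) (hs _)
    _ = 2 * (∑ i, cycPotential Q i - 2 * n) := by
      rw [sum_add_distrib, hsub, hadd, sum_sub_distrib, sum_const, card_univ, Fintype.card_fin,
        nsmul_eq_mul]
      ring

theorem exists_cycPotential_lt_two (hn : 5 ≤ n) (hQ : 3 * ∑ j, Q j ≤ 2 * n + 2) :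
    ∃ i, cycPotential Q i < 2 := by
  by_contra! hP
  set S := ∑ j, Q j with hS
  have hsum := sum_cycPotential_le Q
  rw [← Nat.cast_sum, ← hS] at hsum
  have hlow : 2 * (n : ℚ) ≤ ∑ i, cycPotential Q i := by
    have := card_nsmul_le_sum univ (cycPotential Q) 2 fun i _ => hP i
    rw [card_univ, Fintype.card_fin, nsmul_eq_mul] at this
    linarith
  have hcount := card_ne_zero_add_card_two_le_le_sum Q
  have hsplit : #{j | Q j = 0} + #{j | Q j ≠ 0} = n := by
    rw [card_filter_add_card_filter_not, card_univ, Fintype.card_fin]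
  by_cases hbig : ∃ j, 2 ≤ Q j
  · obtain ⟨j, hj⟩ := hbig
    have : 1 ≤ #{j | 2 ≤ Q j} := card_pos.mpr ⟨j, mem_filter.mpr ⟨mem_univ j, hj⟩⟩
    have hempty : (n : ℚ) + 1 ≤ #{j | Q j = 0} + S := by exact_mod_cast (by omega : n + 1 ≤ _)
    have hempty_le := card_eq_zero_le_of_two_le_cycPotential Q hP
    have hQ' : (3 * S : ℚ) ≤ 2 * n + 2 := by exact_mod_cast hQ
    have hS3 : 2 * n ≤ 3 * S := by
      have : (0 : ℚ) ≤ 2⁻¹ ^ (n / 2) * S := by positivity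
      exact_mod_cast (by linarith : (2 * n : ℚ) ≤ 3 * S)
    linarith [eleven_lt_add_mul_half_pow hn hS3]
  · simp only [not_exists, not_le] at hbig
    obtain ⟨u, hu⟩ := card_pos.mp (by omega : 0 < #{j | Q j = 0})
    exact (cycPotential_lt_two Q (mem_filter.mp hu).2 fun j => by have := hbig j; omega).not_ge (hP u)

end CycPotential

section Prism

variable {n : ℕ}

def rungSum (p : Fin n × Fin 2 → ℕ) (i : Fin n) : ℕ := p (i, 0) + p (i, 1)

theorem sum_rungSum (p : Fin n × Fin 2 → ℕ) : ∑ i, rungSum p i = ∑ v, p v := by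
  simp only [rungSum, Fintype.sum_prod_type, Fin.sum_univ_two]

theorem potential_cycWeight_fst (p : Fin n × Fin 2 → ℕ) (i : Fin n) :
    potential (fun v => cycWeight i v.1) p = cycPotential (rungSum p) i := by
  simp only [potential, cycPotential, rungSum, Fintype.sum_prod_type, Fin.sum_univ_two]
  push_cast
  exact sum_congr rfl fun j _ => by ring

variable [NeZero n]

theorem cycWeight_fst_le_of_prism_adj (i : Fin n) {v u : Fin n × Fin 2}
    (h : (prism n).Adj v u) : cycWeight i u.1 ≤ 2 * cycWeight i v.1 := by
  rcases h with ⟨hc, _⟩ | ⟨_, he⟩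
  · exact cycWeight_le_two_mul_of_adj hc i
  · rw [← he]
    linarith [cycWeight_nonneg i v.1]

theorem two_le_cycPotential_of_rubblingReach {p q : Fin n × Fin 2 → ℕ} {i : Fin n}
    (hq : RubblingReach (prism n) p q) (h2 : 2 ≤ q (i, 0) + q (i, 1)) :
    2 ≤ cycPotential (rungSum p) i := calc
  (2 : ℚ) ≤ rungSum q i * cycWeight i i := by
    rw [cycWeight_self, mul_one]
    exact_mod_cast h2
  _ ≤ cycPotential (rungSum q) i :=
    single_le_sum (f := fun j => (rungSum q j : ℚ) * cycWeight i j)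
      (fun j _ => mul_nonneg (Nat.cast_nonneg _) (cycWeight_nonneg i j)) (mem_univ i)
  _ ≤ cycPotential (rungSum p) i := by
    simpa only [potential_cycWeight_fst] using
      hq.potential_le fun v u h => cycWeight_fst_le_of_prism_adj i h

end Prism

section Pattern

variable {n : ℕ}

theorem cycleGraph_adj_iff (hn : 2 ≤ n) (a b : Fin n) :
    (cycleGraph n).Adj a b ↔ b.val = a.val + 1 ∨ a.val = b.val + 1 ∨
      (a.val + 1 = n ∧ b.val = 0) ∨ (b.val + 1 = n ∧ a.val = 0) := by
  have := a.isLt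
  have := b.isLt
  have hmod : ∀ x, x < 2 * n → (x % n = 1 ↔ x = 1 ∨ x = n + 1) := fun x hx => by
    rcases Nat.lt_or_ge x n with h | h
    · rw [Nat.mod_eq_of_lt h]; omega
    · rw [Nat.mod_eq_sub_mod h, Nat.mod_eq_of_lt (by omega)]; omega
  rw [cycleGraph_adj', Fin.val_sub, Fin.val_sub, hmod _ (by omega), hmod _ (by omega)]
  omega

theorem prism_adj_row_iff (a b : Fin n) (r : Fin 2) :
    (prism n).Adj (a, r) (b, r) ↔ (cycleGraph n).Adj a b := boxProd_adj_left

theorem prism_adj_zero_one (a : Fin n) : (prism n).Adj (a, 0) (a, 1) :=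
  boxProd_adj_right.mpr (pathGraph_adj.mpr (Or.inl rfl))

def prismPattern (n : ℕ) : Fin n × Fin 2 → ℕ := fun v => if v.1.val % 3 = v.2.val then 1 else 0

theorem sum_range_ite_mod_three (N : ℕ) :
    ∑ k ∈ range N, (if k % 3 = 2 then 0 else 1) = N - N / 3 := by
  induction N with
  | zero => rfl
  | succ N ih => rw [sum_range_succ, ih]; split_ifs <;> omega

theorem sum_prismPattern : ∑ v, prismPattern n v = n - n / 3 := by
  rw [Fintype.sum_prod_type, ← sum_range_ite_mod_three, ← Fin.sum_univ_eq_sum_range]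
  refine sum_congr rfl fun j _ => ?_
  simp only [Fin.sum_univ_two, prismPattern, Fin.val_zero, Fin.val_one]
  split_ifs <;> omega

variable [NeZero n]

theorem kReachable_prismPattern_row_zero (hn : 5 ≤ n) (j : Fin n) :
    KReachable (prism n) (prismPattern n) (j, 0) 1 := by
  have hn2 : 2 ≤ n := by omega
  have hj := j.isLt
  rcases (by omega : j.val % 3 = 0 ∨ j.val % 3 = 1 ∨ j.val % 3 = 2) with hj3 | hj3 | hj3
  · exact .of_le (by simp [prismPattern, hj3])
  · refine .of_rubble (x := (j - 1, 0)) (y := (j, 1)) ?_ ?_ (prism_adj_zero_one j).symm ?_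
      (.of_le ?_)
    all_goals
      simp only [prism_adj_row_iff, cycleGraph_adj_iff hn2, prismPattern, Function.update_apply,
        Prod.mk.injEq, Fin.ext_iff, Fin.val_sub_one_eq_ite, Fin.val_zero, Fin.val_one, ne_eq]
      grind
  · refine .of_rubble (x := (j + 1, 0)) (y := (j - 1, 0)) ?_ ?_ ?_ ?_
      (.of_rubble (x := (j - 1 - 1, 0)) (y := (j - 1, 1)) ?_ ?_ (prism_adj_zero_one _).symm ?_
        (.of_le ?_))
    all_goals
      simp only [prism_adj_row_iff, cycleGraph_adj_iff hn2, prismPattern, Function.update_apply,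
        Prod.mk.injEq, Fin.ext_iff, Fin.val_add_one_eq_ite, Fin.val_sub_one_eq_ite, Fin.val_zero,
        Fin.val_one, ne_eq]
      grind

theorem kReachable_prismPattern_row_one (hn : 5 ≤ n) (j : Fin n) :
    KReachable (prism n) (prismPattern n) (j, 1) 1 := by
  have hn2 : 2 ≤ n := by omega
  have hj := j.isLt
  have hone : (1 : Fin n).val = 1 := by rw [Fin.val_one', Nat.mod_eq_of_lt (by omega)]
  rcases (by omega : j.val % 3 = 0 ∨ j.val % 3 = 1 ∨ j.val % 3 = 2) with hj3 | hj3 | hj3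
  · by_cases hseam : j.val + 1 = n
    · refine .of_rubble (x := (j, 0)) (y := (0, 1)) ?_ (prism_adj_zero_one j) ?_ ?_
        (.of_rubble (x := (0, 0)) (y := (1, 1)) ?_ (prism_adj_zero_one _) ?_ ?_ (.of_le ?_))
      all_goals
        simp only [prism_adj_row_iff, cycleGraph_adj_iff hn2, prismPattern, Function.update_apply,
          Prod.mk.injEq, Fin.ext_iff, Fin.val_zero, Fin.val_one, hone, ne_eq]
        grind
    · refine .of_rubble (x := (j, 0)) (y := (j + 1, 1)) ?_ (prism_adj_zero_one j) ?_ ?_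
        (.of_le ?_)
      all_goals
        simp only [prism_adj_row_iff, cycleGraph_adj_iff hn2, prismPattern, Function.update_apply,
          Prod.mk.injEq, Fin.ext_iff, Fin.val_add_one_eq_ite, Fin.val_zero, Fin.val_one, ne_eq]
        grind
  · exact .of_le (by simp [prismPattern, hj3])
  · by_cases hseam : j.val + 2 = n
    · refine .of_rubble (x := (j - 1, 1)) (y := (j + 1, 1)) ?_ ?_ ?_ ?_
        (.of_rubble (x := (j + 1, 0)) (y := (0, 1)) ?_ (prism_adj_zero_one _) ?_ ?_
          (.of_rubble (x := (0, 0)) (y := (1, 1)) ?_ (prism_adj_zero_one _) ?_ ?_ (.of_le ?_)))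
      all_goals
        simp only [prism_adj_row_iff, cycleGraph_adj_iff hn2, prismPattern, Function.update_apply,
          Prod.mk.injEq, Fin.ext_iff, Fin.val_add_one_eq_ite, Fin.val_sub_one_eq_ite, Fin.val_zero,
          Fin.val_one, hone, ne_eq]
        grind
    · refine .of_rubble (x := (j - 1, 1)) (y := (j + 1, 1)) ?_ ?_ ?_ ?_
        (.of_rubble (x := (j + 1, 0)) (y := (j + 1 + 1, 1)) ?_ (prism_adj_zero_one _) ?_ ?_
          (.of_le ?_))
      all_goals
        simp only [prism_adj_row_iff, cycleGraph_adj_iff hn2, prismPattern, Function.update_apply,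
          Prod.mk.injEq, Fin.ext_iff, Fin.val_add_one_eq_ite, Fin.val_sub_one_eq_ite, Fin.val_zero,
          Fin.val_one, ne_eq]
        grind

theorem optRub_prism_le (hn : 5 ≤ n) : 3 * optRub (prism n) ≤ 2 * n + 2 := by
  have hsolv : Solvable (prism n) (prismPattern n) := by
    rintro ⟨j, r⟩
    fin_cases r
    exacts [kReachable_prismPattern_row_zero hn j, kReachable_prismPattern_row_one hn j]
  have : optRub (prism n) ≤ n - n / 3 := Nat.sInf_le ⟨_, hsolv, sum_prismPattern⟩
  omega

end Pattern

theorem exists_rung_not_two_reachable_general (n : ℕ) (hn : 5 ≤ n) (p : Fin n × Fin 2 → ℕ)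
    (hopt : ∑ v, p v = optRub (prism n)) :
    ∃ i : Fin n, ¬ ∃ q, RubblingReach (prism n) p q ∧ 2 ≤ q (i, 0) + q (i, 1) := by
  have : NeZero n := ⟨by omega⟩
  have hsize : 3 * ∑ i, rungSum p i ≤ 2 * n + 2 := by
    rw [sum_rungSum, hopt]
    exact optRub_prism_le hn
  obtain ⟨i, hi⟩ := exists_cycPotential_lt_two (rungSum p) hn hsize
  exact ⟨i, fun ⟨q, hq, h2⟩ => (two_le_cycPotential_of_rubblingReach hq h2).not_gt hi⟩

/-- Every optimal distribution on the `n`-prism (`n ≥ 5`) has a rung that is not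
2-reachable. -/
theorem exists_rung_not_two_reachable (n : ℕ) (hn : 5 ≤ n) (p : Fin n × Fin 2 → ℕ)
    (hsolv : Solvable (prism n) p) (hopt : ∑ v, p v = optRub (prism n)) :
    ∃ i : Fin n, ¬ ∃ q, RubblingReach (prism n) p q ∧ 2 ≤ q (i, 0) + q (i, 1) :=
  exists_rung_not_two_reachable_general n hn p hopt
end
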